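/- arXiv:2305.11763 — 13 statements merged into one kernel-verified Lean document; each statement's English description precedes it below -/
import Mathlib

section
/- Fix a positive integer D. Let G be a finite simple graph with Δ(G) ≤ D and let S be a maximum clique of G² (so |S| = ω(G²)). If G is nice with respect to S, then 2·ω(G²) ≤ 5·D. -/
open scoped Classical

/-- The square of a simple graph. -/
def square {V : Type*} (G : SimpleGraph V) : SimpleGraph V where
  Adj u v := u ≠ v ∧ (G.Adj u v ∨ ∃ w, G.Adj u w ∧ G.Adj w v)
  symm := by
    constructor
    rintro u v ⟨h1, h2⟩
    refine ⟨h1.symm, ?_⟩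
    rcases h2 with h | ⟨w, hw1, hw2⟩
    · exact Or.inl h.symm
    · exact Or.inr ⟨w, hw2.symm, hw1.symm⟩
  loopless := by constructor; rintro v ⟨h, -⟩; exact h rfl

/-- `G` is nice with respect to a vertex set `S`: `S` is a clique in `G²`, `S` is an
independent set in `G`, and there is a linear order of the vertices (encoded by an
injection `f : V → ℕ`) in which every vertex has at most 2 neighbors later in the
order, and the vertices of `S` appear consecutively. -/
def Nice {V : Type*} [Fintype V] (G : SimpleGraph V) (S : Finset V) : Prop :=
  (square G).IsClique (S : Set V) ∧
  ((S : Set V).Pairwise fun v w => ¬ G.Adj v w) ∧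
  ∃ f : V → ℕ, Function.Injective f ∧
    (∀ v : V, (Finset.univ.filter (fun w => G.Adj v w ∧ f v < f w)).card ≤ 2) ∧
    (∀ u v w : V, u ∈ S → w ∈ S → f u ≤ f v → f v ≤ f w → v ∈ S)

/-!
Let `L v` be the set of (at most two) later neighbours of `v`. Two vertices of `S` are not
adjacent, so they have a common neighbour `y ∉ S`, and since `S` is consecutive `y` comes before
both or after both. An earlier neighbour `y` of `v` serves this way for at most one other vertex
of `S` (else `y` would have three later neighbours), and these `y` and `L v` are distinct
neighbours of `v`; so all but `D - |L v|` vertices of `S ∖ {v}` share a later neighbour, a hub,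
with `v`.

The rest is counting with the hub sets `L v`. If some `|L v| ≤ 1` then `|S| ≤ 2D`. Otherwise let
`d(w)` count the `v ∈ S` with `w ∈ L v` and `μ(a, b)` those with `L v = {a, b}`: every occurring
pair satisfies `|S| + μ(a, b) + 2 ≤ D + d(a) + d(b)`, and `∑ d = 2|S|` with `d ≤ D`, so it
suffices to exclude six or more hubs. Summing the pair inequality over the partners of a hub of
minimum degree does this.
-/

open Finset

-- `k = |S|`, `d` is a minimum hub degree, `t` and `r` count the other hubs that do and do not
-- share a vertex of `S` with it, and `X`, `Y` are their degree sums.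
theorem two_mul_le_five_mul_of_hub_bounds {k D d t r X Y : ℕ} (hsum : d + X + Y = 2 * k)
    (hpartners : t * (k + 2) + d ≤ t * (D + d) + X) (hd : d ≤ D) (hdk : k + 3 ≤ d + 2 * D)
    (hX : t * d ≤ X) (hX' : X ≤ t * D) (hY : r * d ≤ Y) (hY' : Y ≤ r * D)
    (hYk : r * (k + 3) ≤ Y + r * (2 * D)) : 2 * k ≤ 5 * D := by
  by_contra! hk
  have hm : 5 ≤ t + r := by
    by_contra! hm
    nlinarith
  have ht : 2 ≤ t := by
    by_contra! ht
    interval_cases t <;> omega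
  have htr : t + r = 5 := by
    by_contra! hne
    -- with `(t - 2)(D - d) ≥ 0` the hypotheses give `(t + r)(k + 2 - 2D) + 2D ≤ 2k`
    have h1 : (0 : ℤ) ≤ ((t : ℤ) - 2) * ((D : ℤ) - d) := mul_nonneg (by omega) (by omega)
    have h2 : (0 : ℤ) ≤ ((t : ℤ) + r - 6) * ((k : ℤ) + 2 - 2 * D) :=
      mul_nonneg (by omega) (by omega)
    zify at *
    nlinarith
  obtain rfl : r = 5 - t := by omega
  have : t ≤ 5 := by omega
  interval_cases t <;> omega

section HubSystem

variable {α β : Type*} [DecidableEq β] (S : Finset α) (L : α → Finset β)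

def hubDegree (w : β) : ℕ := #{u ∈ S | w ∈ L u}

def pairCount (a b : β) : ℕ := #{u ∈ S | L u = {a, b}}

theorem sum_hubDegree : ∑ w ∈ S.biUnion L, hubDegree S L w = ∑ v ∈ S, #(L v) := by
  refine (sum_card_bipartiteAbove_eq_sum_card_bipartiteBelow (s := S)
    (t := S.biUnion L) fun v w => w ∈ L v).symm.trans ?_
  refine sum_congr rfl fun v hv => ?_
  rw [bipartiteAbove, filter_mem_eq_inter, inter_eq_right.mpr (subset_biUnion_of_mem L hv)]

theorem hubDegree_eq_sum_pairCount (hL : ∀ v ∈ S, #(L v) = 2) (w : β) :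
    hubDegree S L w = ∑ w' ∈ (S.biUnion L).erase w, pairCount S L w w' := by
  have hsplit : {u ∈ S | w ∈ L u} =
      ((S.biUnion L).erase w).biUnion fun w' => {u ∈ S | L u = {w, w'}} := by
    ext u
    simp only [mem_filter, mem_biUnion, mem_erase]
    constructor
    · rintro ⟨hu, hw⟩
      obtain ⟨a, b, hab, hLu⟩ := card_eq_two.mp (hL u hu)
      rw [hLu, mem_insert, mem_singleton] at hw
      rcases hw with rfl | rfl
      · exact ⟨b, ⟨hab.symm, u, hu, by simp [hLu]⟩, hu, hLu⟩
      · exact ⟨a, ⟨hab, u, hu, by simp [hLu]⟩, hu, by rw [hLu, pair_comm]⟩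
    · rintro ⟨w', -, hu, hLu⟩
      exact ⟨hu, by simp [hLu]⟩
  rw [hubDegree, hsplit, card_biUnion]
  · rfl
  · intro x hx y _ hxy
    refine disjoint_filter.mpr fun u _ hx' hy' => hxy ?_
    have : x ∈ ({w, y} : Finset β) := hy' ▸ hx' ▸ by simp
    simpa [(mem_erase.mp hx).1] using this

def partners (w : β) : Finset β := {w' ∈ (S.biUnion L).erase w | pairCount S L w w' ≠ 0}

theorem sum_pairCount_partners (hL : ∀ v ∈ S, #(L v) = 2) (w : β) :
    ∑ w' ∈ partners S L w, pairCount S L w w' = hubDegree S L w := by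
  rw [partners, sum_filter_ne_zero, hubDegree_eq_sum_pairCount S L hL]

variable {S L} {D : ℕ}

theorem card_add_three_le_hubDegree (hL : ∀ v ∈ S, #(L v) = 2)
    (hdeg : ∀ w, hubDegree S L w ≤ D)
    (hpair : ∀ a b, a ≠ b → 0 < pairCount S L a b →
      #S + pairCount S L a b + 2 ≤ D + hubDegree S L a + hubDegree S L b)
    {v : α} (hv : v ∈ S) {w : β} (hw : w ∈ L v) : #S + 3 ≤ hubDegree S L w + 2 * D := by
  obtain ⟨a, b, hab, hLv⟩ := card_eq_two.mp (hL v hv)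
  have hpos : 0 < pairCount S L a b := card_pos.mpr ⟨v, mem_filter.mpr ⟨hv, hLv⟩⟩
  have := hpair a b hab hpos
  have := hdeg a
  have := hdeg b
  rw [hLv, mem_insert, mem_singleton] at hw
  rcases hw with rfl | rfl <;> omega

theorem card_partners_mul_add_hubDegree_le (hL : ∀ v ∈ S, #(L v) = 2)
    (hpair : ∀ a b, a ≠ b → 0 < pairCount S L a b →
      #S + pairCount S L a b + 2 ≤ D + hubDegree S L a + hubDegree S L b) (w : β) :
    #(partners S L w) * (#S + 2) + hubDegree S L w ≤
      #(partners S L w) * (D + hubDegree S L w) + ∑ w' ∈ partners S L w, hubDegree S L w' := by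
  have hsum : ∑ w' ∈ partners S L w, (#S + 2 + pairCount S L w w') ≤
      ∑ w' ∈ partners S L w, (D + hubDegree S L w + hubDegree S L w') := by
    refine sum_le_sum fun w' hw' => ?_
    obtain ⟨hw'W, hpos⟩ := mem_filter.mp hw'
    have := hpair w w' (ne_of_mem_erase hw'W).symm (Nat.pos_of_ne_zero hpos)
    omega
  simpa only [sum_add_distrib, sum_const, smul_eq_mul, mul_add, sum_pairCount_partners S L hL]
    using hsum

theorem two_mul_card_le_of_card_eq_two (hL : ∀ v ∈ S, #(L v) = 2)
    (hdeg : ∀ w, hubDegree S L w ≤ D)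
    (hpair : ∀ a b, a ≠ b → 0 < pairCount S L a b →
      #S + pairCount S L a b + 2 ≤ D + hubDegree S L a + hubDegree S L b) :
    2 * #S ≤ 5 * D := by
  set W := S.biUnion L
  rcases S.eq_empty_or_nonempty with hS | ⟨v₀, hv₀⟩
  · simp [hS]
  obtain ⟨w₀, hw₀⟩ := card_pos.mp (by simp [hL v₀ hv₀] : 0 < #(L v₀))
  obtain ⟨s, hs, hmin⟩ := W.exists_min_image (hubDegree S L) ⟨w₀, mem_biUnion.mpr ⟨v₀, hv₀, hw₀⟩⟩
  set T := partners S L s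
  set R := {w ∈ W.erase s | ¬pairCount S L s w ≠ 0}
  have hsum : hubDegree S L s + ∑ w ∈ T, hubDegree S L w + ∑ w ∈ R, hubDegree S L w =
      2 * #S := by
    have hTR : ∑ w ∈ T, hubDegree S L w + ∑ w ∈ R, hubDegree S L w =
        ∑ w ∈ W.erase s, hubDegree S L w := sum_filter_add_sum_filter_not _ _ _
    rw [add_assoc, hTR, add_sum_erase _ _ hs, sum_hubDegree,
      sum_congr rfl hL, sum_const, smul_eq_mul, mul_comm]
  have hT : ∀ w ∈ T, w ∈ W := fun w hw => mem_of_mem_erase (filter_subset _ _ hw)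
  have hR : ∀ w ∈ R, w ∈ W := fun w hw => mem_of_mem_erase (filter_subset _ _ hw)
  obtain ⟨v, hv, hsv⟩ := mem_biUnion.mp hs
  refine two_mul_le_five_mul_of_hub_bounds (r := #R) hsum
    (card_partners_mul_add_hubDegree_le hL hpair s) (hdeg s)
    (card_add_three_le_hubDegree hL hdeg hpair hv hsv) ?_ ?_ ?_ ?_ ?_
  · simpa using card_nsmul_le_sum T _ _ fun w hw => hmin w (hT w hw)
  · simpa using sum_le_card_nsmul T _ _ fun w _ => hdeg w
  · simpa using card_nsmul_le_sum R _ _ fun w hw => hmin w (hR w hw)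
  · simpa using sum_le_card_nsmul R _ _ fun w _ => hdeg w
  · have := card_nsmul_le_sum R (fun w => hubDegree S L w + 2 * D) (#S + 3) fun w hw => by
      obtain ⟨u, hu, hwu⟩ := mem_biUnion.mp (hR w hw)
      exact card_add_three_le_hubDegree hL hdeg hpair hu hwu
    simpa [sum_add_distrib, mul_comm] using this

section Cover

variable [DecidableEq α]

theorem two_mul_card_le_of_card_lt_two (hD : 0 < D) (hdeg : ∀ w, hubDegree S L w ≤ D) {v : α}
    (hcover : #S + #(L v) ≤ D + #(insert v {u ∈ S | ∃ w ∈ L v, w ∈ L u})) (hLv : #(L v) < 2) :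
    2 * #S ≤ 5 * D := by
  have hsub : {u ∈ S | ∃ w ∈ L v, w ∈ L u} ⊆ (L v).biUnion fun w => {u ∈ S | w ∈ L u} := by
    intro u hu
    obtain ⟨hu, w, hw, hwu⟩ := mem_filter.mp hu
    exact mem_biUnion.mpr ⟨w, hw, mem_filter.mpr ⟨hu, hwu⟩⟩
  have hcard := (card_insert_le v _).trans <| Nat.add_le_add_right
    ((card_le_card hsub).trans (card_biUnion_le_card_mul _ _ D fun w _ => hdeg w)) 1
  interval_cases h : #(L v) <;> omega

theorem card_add_pairCount_le_of_cover {v : α} (hv : v ∈ S)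
    (hcover : #S + #(L v) ≤ D + #(insert v {u ∈ S | ∃ w ∈ L v, w ∈ L u})) {a b : β}
    (hab : a ≠ b) (hLv : L v = {a, b}) :
    #S + pairCount S L a b + 2 ≤ D + hubDegree S L a + hubDegree S L b := by
  have hunion : insert v {u ∈ S | ∃ w ∈ L v, w ∈ L u} =
      {u ∈ S | a ∈ L u} ∪ {u ∈ S | b ∈ L u} := by
    refine insert_eq_of_mem (mem_filter.mpr ⟨hv, a, by simp [hLv]⟩) |>.trans ?_
    ext u
    simp [hLv, and_or_left]
  have hinter : pairCount S L a b ≤ #({u ∈ S | a ∈ L u} ∩ {u ∈ S | b ∈ L u}) :=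
    card_le_card fun u hu => by simp_all
  have := card_union_add_card_inter {u ∈ S | a ∈ L u} {u ∈ S | b ∈ L u}
  rw [hunion, hLv, card_pair hab] at hcover
  unfold hubDegree
  omega

theorem two_mul_card_le_of_cover (hD : 0 < D) (hL : ∀ v ∈ S, #(L v) ≤ 2)
    (hdeg : ∀ w, hubDegree S L w ≤ D)
    (hcover : ∀ v ∈ S, #S + #(L v) ≤ D + #(insert v {u ∈ S | ∃ w ∈ L v, w ∈ L u})) :
    2 * #S ≤ 5 * D := by
  by_cases h : ∀ v ∈ S, #(L v) = 2
  · refine two_mul_card_le_of_card_eq_two h hdeg fun a b hab hpos => ?_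
    obtain ⟨v, hv⟩ := card_pos.mp hpos
    obtain ⟨hvS, hLv⟩ := mem_filter.mp hv
    exact card_add_pairCount_le_of_cover hvS (hcover v hvS) hab hLv
  · obtain ⟨v, hv, hne⟩ := not_forall₂.mp h
    exact two_mul_card_le_of_card_lt_two hD hdeg (hcover v hv) (by have := hL v hv; omega)

end Cover

end HubSystem

section Graph

variable {V : Type*} {G : SimpleGraph V} {S : Finset V} {f : V → ℕ}

theorem exists_common_neighbor_of_isClique_square (hsq : (square G).IsClique (S : Set V))
    (hindep : (S : Set V).Pairwise fun v w => ¬G.Adj v w) {v v' : V} (hv : v ∈ S)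
    (hv' : v' ∈ S) (hne : v ≠ v') : ∃ y, G.Adj v y ∧ G.Adj v' y := by
  obtain ⟨-, hadj | ⟨y, hvy, hyv'⟩⟩ := hsq hv hv' hne
  · exact absurd hadj (hindep hv hv' hne)
  · exact ⟨y, hvy, hyv'.symm⟩

theorem lt_and_lt_or_lt_and_lt_of_notMem
    (hcons : ∀ u v w, u ∈ S → w ∈ S → f u ≤ f v → f v ≤ f w → v ∈ S) {y v v' : V}
    (hy : y ∉ S) (hv : v ∈ S) (hv' : v' ∈ S) :
    f y < f v ∧ f y < f v' ∨ f v < f y ∧ f v' < f y := by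
  have h₁ : ¬(f v ≤ f y ∧ f y ≤ f v') := fun h => hy (hcons v y v' hv hv' h.1 h.2)
  have h₂ : ¬(f v' ≤ f y ∧ f y ≤ f v) := fun h => hy (hcons v' y v hv' hv h.1 h.2)
  omega

variable [Fintype V] {D : ℕ}

noncomputable def laterNeighbors (G : SimpleGraph V) (f : V → ℕ) (v : V) : Finset V :=
  {w | G.Adj v w ∧ f v < f w}

noncomputable def earlierNeighbors (G : SimpleGraph V) (f : V → ℕ) (v : V) : Finset V :=
  {w | G.Adj v w ∧ f w < f v}

theorem mem_laterNeighbors {v w : V} : w ∈ laterNeighbors G f v ↔ G.Adj v w ∧ f v < f w := by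
  simp [laterNeighbors]

theorem mem_earlierNeighbors {v w : V} :
    w ∈ earlierNeighbors G f v ↔ G.Adj v w ∧ f w < f v := by
  simp [earlierNeighbors]

theorem hubDegree_laterNeighbors_le (hΔ : ∀ v, #{w | G.Adj v w} ≤ D) (w : V) :
    hubDegree S (laterNeighbors G f) w ≤ D :=
  (card_le_card fun u hu => by
    simpa using (mem_laterNeighbors.mp (mem_filter.mp hu).2).1.symm).trans (hΔ w)

theorem eq_of_mem_laterNeighbors (hlater : ∀ v, #(laterNeighbors G f v) ≤ 2) {y a b c : V}
    (ha : a ∈ laterNeighbors G f y) (hb : b ∈ laterNeighbors G f y)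
    (hc : c ∈ laterNeighbors G f y) (hab : a ≠ b) (hac : a ≠ c) : b = c := by
  by_contra hbc
  exact (hlater y).not_gt (two_lt_card.mpr ⟨a, ha, b, hb, c, hc, hab, hac, hbc⟩)

theorem card_earlierNeighbors_add_card_laterNeighbors_le (hΔ : ∀ v, #{w | G.Adj v w} ≤ D)
    (v : V) : #(earlierNeighbors G f v) + #(laterNeighbors G f v) ≤ D := by
  have hdisj : Disjoint (earlierNeighbors G f v) (laterNeighbors G f v) :=
    disjoint_left.mpr fun y h₁ h₂ => by
      have := (mem_earlierNeighbors.mp h₁).2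
      have := (mem_laterNeighbors.mp h₂).2
      omega
  rw [← card_union_of_disjoint hdisj]
  refine (card_le_card fun y hy => ?_).trans (hΔ v)
  rcases mem_union.mp hy with hy | hy
  · simpa using (mem_earlierNeighbors.mp hy).1
  · simpa using (mem_laterNeighbors.mp hy).1

theorem card_commonEarlier_le_card_earlierNeighbors (hlater : ∀ v, #(laterNeighbors G f v) ≤ 2)
    (S : Finset V) (v : V) :
    #{v' ∈ S.erase v | ∃ y, G.Adj v y ∧ G.Adj v' y ∧ f y < f v ∧ f y < f v'} ≤
      #(earlierNeighbors G f v) := by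
  refine card_le_card_of_forall_subsingleton (fun v' y => G.Adj v' y ∧ f y < f v')
    (fun v' hv' => ?_) fun y hy v₁ hv₁ v₂ hv₂ => ?_
  · obtain ⟨-, y, hvy, hv'y, hyv, hyv'⟩ := mem_filter.mp hv'
    exact ⟨y, mem_earlierNeighbors.mpr ⟨hvy, hyv⟩, hv'y, hyv'⟩
  · have later : ∀ u, G.Adj u y → f y < f u → u ∈ laterNeighbors G f y := fun u hu hyu =>
      mem_laterNeighbors.mpr ⟨hu.symm, hyu⟩
    obtain ⟨hvy, hyv⟩ := mem_earlierNeighbors.mp hy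
    obtain ⟨hv₁S, h₁, hy₁⟩ := hv₁
    obtain ⟨hv₂S, h₂, hy₂⟩ := hv₂
    exact eq_of_mem_laterNeighbors hlater (later v hvy hyv) (later v₁ h₁ hy₁) (later v₂ h₂ hy₂)
      (ne_of_mem_erase (mem_filter.mp hv₁S).1).symm
      (ne_of_mem_erase (mem_filter.mp hv₂S).1).symm

theorem card_add_card_laterNeighbors_le (hΔ : ∀ v, #{w | G.Adj v w} ≤ D)
    (hlater : ∀ v, #(laterNeighbors G f v) ≤ 2) (hsq : (square G).IsClique (S : Set V))
    (hindep : (S : Set V).Pairwise fun v w => ¬G.Adj v w)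
    (hcons : ∀ u v w, u ∈ S → w ∈ S → f u ≤ f v → f v ≤ f w → v ∈ S) {v : V} (hv : v ∈ S) :
    #S + #(laterNeighbors G f v) ≤
      D + #(insert v {u ∈ S | ∃ w ∈ laterNeighbors G f v, w ∈ laterNeighbors G f u}) := by
  have hcover : S ⊆ insert v {u ∈ S | ∃ w ∈ laterNeighbors G f v, w ∈ laterNeighbors G f u} ∪
      {v' ∈ S.erase v | ∃ y, G.Adj v y ∧ G.Adj v' y ∧ f y < f v ∧ f y < f v'} := by
    intro u hu
    rcases eq_or_ne u v with rfl | hne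
    · exact mem_union_left _ (mem_insert_self u _)
    obtain ⟨y, hvy, huy⟩ :=
      exists_common_neighbor_of_isClique_square hsq hindep hv hu hne.symm
    have hy : y ∉ S := fun hy => hindep hv hy (G.ne_of_adj hvy) hvy
    rcases lt_and_lt_or_lt_and_lt_of_notMem hcons hy hv hu with ⟨hyv, hyu⟩ | ⟨hvy', huy'⟩
    · exact mem_union_right _
        (mem_filter.mpr ⟨mem_erase.mpr ⟨hne, hu⟩, y, hvy, huy, hyv, hyu⟩)
    · exact mem_union_left _ (mem_insert_of_mem (mem_filter.mpr
        ⟨hu, y, mem_laterNeighbors.mpr ⟨hvy, hvy'⟩, mem_laterNeighbors.mpr ⟨huy, huy'⟩⟩))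
  have := (card_le_card hcover).trans (card_union_le _ _)
  have := card_commonEarlier_le_card_earlierNeighbors hlater S v
  have := card_earlierNeighbors_add_card_laterNeighbors_le (f := f) hΔ v
  omega

end Graph

theorem clique_square_nice_general {V : Type*} [Fintype V] (D : ℕ) (hD : 0 < D)
    (G : SimpleGraph V)
    (hΔ : ∀ v : V, (Finset.univ.filter (fun w => G.Adj v w)).card ≤ D)
    (S : Finset V)
    (hnice : Nice G S) :
    2 * S.card ≤ 5 * D := by
  obtain ⟨hsq, hindep, f, -, hlater, hcons⟩ := hnice
  exact two_mul_card_le_of_cover hD (fun v _ => hlater v) (hubDegree_laterNeighbors_le hΔ)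
    fun v hv => card_add_card_laterNeighbors_le hΔ hlater hsq hindep hcons hv

/-- If `Δ(G) ≤ D`, `S` is a maximum clique of `G²`, and `G` is nice with respect to
`S`, then `2·ω(G²) ≤ 5·D`. -/
theorem clique_square_nice {V : Type*} [Fintype V] (D : ℕ) (hD : 0 < D)
    (G : SimpleGraph V)
    (hΔ : ∀ v : V, (Finset.univ.filter (fun w => G.Adj v w)).card ≤ D)
    (S : Finset V)
    (hclique : (square G).IsClique (S : Set V))
    (hmax : ∀ T : Finset V, (square G).IsClique (T : Set V) → T.card ≤ S.card)
    (hnice : Nice G S) :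
    2 * S.card ≤ 5 * D :=
  clique_square_nice_general D hD G hΔ S hnice
end

section
/- Let D be a positive integer and let H be a multigraph on a finite vertex set with Δ(H) ≤ D. If every edge of H shares at least one endpoint with all but at most D−2 other edges of H (i.e., for every edge vw, the number of edges of H with both endpoints outside {v,w} is at most D−2), then 2·|E(H)| ≤ 5·D. -/
open scoped Classical

/-- Let `H` be a multigraph (given by a symmetric, loopless multiplicity function
`μ`) on a finite vertex set with `Δ(H) ≤ D`. If every edge of `H` shares at least
one endpoint with all but at most `D−2` other edges (for every edge `vw`, the number
of edges with both endpoints outside `{v,w}` is at most `D−2`, stated in doubled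
form as `∑_{x,y ∉ {v,w}} μ(x,y) + 4 ≤ 2·D`), then `2·|E(H)| ≤ 5·D`, i.e.
`∑_{v,w} μ(v,w) ≤ 5·D`. -/
theorem multigraph_edge_bound {V : Type*} [Fintype V] (D : ℕ) (hD : 0 < D)
    (μ : V → V → ℕ)
    (hsymm : ∀ v w : V, μ v w = μ w v)
    (hloop : ∀ v : V, μ v v = 0)
    (hΔ : ∀ v : V, ∑ w : V, μ v w ≤ D)
    (hshare : ∀ v w : V, v ≠ w → 0 < μ v w →
      (∑ x ∈ Finset.univ \ {v, w}, ∑ y ∈ Finset.univ \ {v, w}, μ x y) + 4 ≤ 2 * D) :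
    ∑ v : V, ∑ w : V, μ v w ≤ 5 * D := by
  classical
  set d : V → ℕ := fun v => ∑ w : V, μ v w with hd_def
  set S : ℕ := ∑ v : V, d v with hS_def
  show S ≤ 5 * D
  by_contra hcon
  push_neg at hcon
  have hS : 5 * D + 1 ≤ S := hcon
  -- column sums
  have hcol : ∀ v : V, ∑ x : V, μ x v = d v := by
    intro v
    exact Finset.sum_congr rfl (fun x _ => hsymm x v)
  -- the star inequality
  have star : ∀ v w : V, v ≠ w → 0 < μ v w →
      S + 2 * μ v w + 4 ≤ 2 * d v + 2 * d w + 2 * D := by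
    intro v w hvw hpos
    have hident : (∑ x ∈ Finset.univ \ {v, w}, ∑ y ∈ Finset.univ \ {v, w}, μ x y)
        + 2 * d v + 2 * d w = S + 2 * μ v w := by
      have hsub : ({v, w} : Finset V) ⊆ Finset.univ := Finset.subset_univ _
      -- split outer sum of d over rows
      have hrow : ∀ x : V, (∑ y ∈ Finset.univ \ {v, w}, μ x y) + (μ x v + μ x w) = d x := by
        intro x
        have := Finset.sum_sdiff (f := fun y => μ x y) hsub
        rw [Finset.sum_pair hvw] at this
        exact this
      have hS1 : (∑ x ∈ Finset.univ \ {v, w}, d x) + (d v + d w) = S := by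
        have := Finset.sum_sdiff (f := fun x => d x) hsub
        rw [Finset.sum_pair hvw] at this
        exact this
      have hB1 : (∑ x ∈ Finset.univ \ {v, w}, μ x v) + (μ v v + μ w v) = d v := by
        have := Finset.sum_sdiff (f := fun x => μ x v) hsub
        rw [Finset.sum_pair hvw] at this
        rw [hcol v] at this
        exact this
      have hB2 : (∑ x ∈ Finset.univ \ {v, w}, μ x w) + (μ v w + μ w w) = d w := by
        have := Finset.sum_sdiff (f := fun x => μ x w) hsub
        rw [Finset.sum_pair hvw] at this
        rw [hcol w] at this
        exact this
      have hsplit : (∑ x ∈ Finset.univ \ {v, w}, d x)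
          = (∑ x ∈ Finset.univ \ {v, w}, ∑ y ∈ Finset.univ \ {v, w}, μ x y)
            + ((∑ x ∈ Finset.univ \ {v, w}, μ x v) + (∑ x ∈ Finset.univ \ {v, w}, μ x w)) := by
        rw [← Finset.sum_add_distrib, ← Finset.sum_add_distrib]
        exact Finset.sum_congr rfl (fun x _ => (hrow x).symm)
      have hvv : μ v v = 0 := hloop v
      have hww : μ w w = 0 := hloop w
      have hwv : μ w v = μ v w := hsymm w v
      omega
    have := hshare v w hvw hpos
    omega
  -- F1
  have F1 : ∀ v w : V, v ≠ w → 0 < μ v w → D + 5 + 2 * μ v w ≤ 2 * d v := by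
    intro v w hvw hpos
    have h1 := star v w hvw hpos
    have h2 := hΔ w
    have h3 : d w ≤ D := h2
    omega
  -- positive degree vertices have an incident edge
  have exists_nbr : ∀ u : V, 0 < d u → ∃ w : V, w ≠ u ∧ 0 < μ u w := by
    intro u hu
    have : ∑ w : V, μ u w ≠ 0 := by
      change d u ≠ 0; omega
    obtain ⟨w, _, hw⟩ := Finset.exists_ne_zero_of_sum_ne_zero this
    refine ⟨w, ?_, Nat.pos_of_ne_zero hw⟩
    intro h; rw [h] at hw; exact hw (hloop u)
  have Fdeg : ∀ u : V, 0 < d u → D + 7 ≤ 2 * d u := by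
    intro u hu
    obtain ⟨w, hwu, hw⟩ := exists_nbr u hu
    have := F1 u w (fun h => hwu h.symm) hw
    omega
  -- neighborhoods
  set N : V → Finset V := fun u => Finset.univ.filter (fun w => 0 < μ u w) with hN_def
  have memN : ∀ u w : V, w ∈ N u ↔ 0 < μ u w := by
    intro u w; simp [hN_def]
  have d_eq_sumN : ∀ u : V, d u = ∑ w ∈ N u, μ u w := by
    intro u
    rw [hd_def]
    exact (Finset.sum_filter_of_ne (fun w _ hw => Nat.pos_of_ne_zero hw)).symm
  have selfN : ∀ u : V, u ∉ N u := by
    intro u h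
    rw [memN] at h
    rw [hloop u] at h
    exact Nat.lt_irrefl 0 h
  -- cap on multiplicities at u : for each nbr, 2 μ u w + (D+5) ≤ 2 d u
  have F2 : ∀ u : V, 0 < d u → 3 ≤ (N u).card := by
    intro u hu
    have hsum : 2 * d u + (N u).card * (D + 5) ≤ (N u).card * (2 * d u) := by
      have h1 : ∀ w ∈ N u, (D + 5) + 2 * μ u w ≤ 2 * d u := by
        intro w hw
        rw [memN] at hw
        have hne : u ≠ w := by
          intro h; rw [h, hloop] at hw; exact Nat.lt_irrefl 0 hw
        exact F1 u w hne hw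
      have h2 : ∑ w ∈ N u, ((D + 5) + 2 * μ u w) ≤ ∑ w ∈ N u, (2 * d u) :=
        Finset.sum_le_sum h1
      rw [Finset.sum_add_distrib, Finset.sum_const, Finset.sum_const, smul_eq_mul, smul_eq_mul,
        ← Finset.mul_sum, ← d_eq_sumN] at h2
      omega
    have hdD : d u ≤ D := hΔ u
    by_contra hlt
    push_neg at hlt
    interval_cases h : (N u).card <;> omega
  have F3 : ∀ u : V, 0 < d u → (N u).card = 3 → 3 * D + 15 ≤ 4 * d u := by
    intro u hu hc
    have hsum : 2 * d u + (N u).card * (D + 5) ≤ (N u).card * (2 * d u) := by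
      have h1 : ∀ w ∈ N u, (D + 5) + 2 * μ u w ≤ 2 * d u := by
        intro w hw
        rw [memN] at hw
        have hne : u ≠ w := by
          intro h; rw [h, hloop] at hw; exact Nat.lt_irrefl 0 hw
        exact F1 u w hne hw
      have h2 : ∑ w ∈ N u, ((D + 5) + 2 * μ u w) ≤ ∑ w ∈ N u, (2 * d u) :=
        Finset.sum_le_sum h1
      rw [Finset.sum_add_distrib, Finset.sum_const, Finset.sum_const, smul_eq_mul, smul_eq_mul,
        ← Finset.mul_sum, ← d_eq_sumN] at h2
      omega
    rw [hc] at hsum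
    omega
  -- helper: positive multiplicity gives positive degree
  have dpos : ∀ u w : V, 0 < μ u w → 0 < d u := by
    intro u w h
    have h2 : μ u w ≤ d u := by
      rw [hd_def]
      exact Finset.single_le_sum (fun i _ => Nat.zero_le _) (Finset.mem_univ w)
    omega
  by_cases h3M : ∃ a1 b1 a2 b2 a3 b3 : V,
      (a1 ≠ b1 ∧ a1 ≠ a2 ∧ a1 ≠ b2 ∧ a1 ≠ a3 ∧ a1 ≠ b3 ∧ b1 ≠ a2 ∧ b1 ≠ b2 ∧ b1 ≠ a3 ∧
        b1 ≠ b3 ∧ a2 ≠ b2 ∧ a2 ≠ a3 ∧ a2 ≠ b3 ∧ b2 ≠ a3 ∧ b2 ≠ b3 ∧ a3 ≠ b3) ∧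
      0 < μ a1 b1 ∧ 0 < μ a2 b2 ∧ 0 < μ a3 b3
  · -- Case B : a 3-matching exists
    obtain ⟨a1, b1, a2, b2, a3, b3,
      ⟨n1, n2, n3, n4, n5, n6, n7, n8, n9, n10, n11, n12, n13, n14, n15⟩, e1, e2, e3⟩ := h3M
    set W : Finset V := {a1, b1, a2, b2, a3, b3} with hW_def
    have hmemW : ∀ t : V, t ∈ W ↔ (t = a1 ∨ t = b1 ∨ t = a2 ∨ t = b2 ∨ t = a3 ∨ t = b3) := by
      intro t; simp [hW_def]
    -- degrees of the six are positive
    have hda1 : 0 < d a1 := dpos a1 b1 e1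
    have hdb1 : 0 < d b1 := dpos b1 a1 (by rw [hsymm]; exact e1)
    have hda2 : 0 < d a2 := dpos a2 b2 e2
    have hdb2 : 0 < d b2 := dpos b2 a2 (by rw [hsymm]; exact e2)
    have hda3 : 0 < d a3 := dpos a3 b3 e3
    have hdb3 : 0 < d b3 := dpos b3 a3 (by rw [hsymm]; exact e3)
    -- explicit sum over W
    have hWsum : ∑ u ∈ W, d u = d a1 + d b1 + d a2 + d b2 + d a3 + d b3 := by
      rw [hW_def]
      rw [Finset.sum_insert (by
        simp only [Finset.mem_insert, Finset.mem_singleton]; push_neg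
        exact ⟨n1, n2, n3, n4, n5⟩)]
      rw [Finset.sum_insert (by
        simp only [Finset.mem_insert, Finset.mem_singleton]; push_neg
        exact ⟨n6, n7, n8, n9⟩)]
      rw [Finset.sum_insert (by
        simp only [Finset.mem_insert, Finset.mem_singleton]; push_neg
        exact ⟨n10, n11, n12⟩)]
      rw [Finset.sum_insert (by
        simp only [Finset.mem_insert, Finset.mem_singleton]; push_neg
        exact ⟨n13, n14⟩)]
      rw [Finset.sum_insert (by
        simp only [Finset.mem_singleton]; exact n15)]
      rw [Finset.sum_singleton]
      ring
    have hWcard : W.card = 6 := by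
      rw [hW_def]
      rw [Finset.card_insert_of_notMem (by
        simp only [Finset.mem_insert, Finset.mem_singleton]; push_neg
        exact ⟨n1, n2, n3, n4, n5⟩)]
      rw [Finset.card_insert_of_notMem (by
        simp only [Finset.mem_insert, Finset.mem_singleton]; push_neg
        exact ⟨n6, n7, n8, n9⟩)]
      rw [Finset.card_insert_of_notMem (by
        simp only [Finset.mem_insert, Finset.mem_singleton]; push_neg
        exact ⟨n10, n11, n12⟩)]
      rw [Finset.card_insert_of_notMem (by
        simp only [Finset.mem_insert, Finset.mem_singleton]; push_neg
        exact ⟨n13, n14⟩)]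
      rw [Finset.card_insert_of_notMem (by
        simp only [Finset.mem_singleton]; exact n15)]
      rw [Finset.card_singleton]
    -- star at the three matching edges
    have st1 := star a1 b1 n1 e1
    have st2 := star a2 b2 n10 e2
    have st3 := star a3 b3 n15 e3
    -- every vertex outside W has degree 0
    have hW0 : ∀ z : V, z ∉ W → d z = 0 := by
      intro z hz
      by_contra hdz
      have hdz' : 0 < d z := Nat.pos_of_ne_zero hdz
      have hzdeg := Fdeg z hdz'
      have hsumle : ∑ u ∈ insert z W, d u ≤ S := by
        rw [hS_def]
        exact Finset.sum_le_sum_of_subset (Finset.subset_univ _)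
      rw [Finset.sum_insert hz, hWsum] at hsumle
      omega
    have hsub : ∀ z : V, 0 < d z → z ∈ W := by
      intro z hz
      by_contra hzW
      rw [hW0 z hzW] at hz
      exact Nat.lt_irrefl 0 hz
    have hSW : ∑ u ∈ W, d u = S := by
      rw [hS_def]
      exact Finset.sum_subset (Finset.subset_univ W) (fun x _ hx => hW0 x hx)
    have hWpos : ∀ u ∈ W, 0 < d u := by
      intro u hu
      rw [hmemW] at hu
      rcases hu with rfl | rfl | rfl | rfl | rfl | rfl <;> assumption
    -- neighborhoods sit inside W
    have hNsub : ∀ u : V, N u ⊆ W.erase u := by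
      intro u w hw
      rw [memN] at hw
      rw [Finset.mem_erase]
      constructor
      · intro h; rw [h, hloop] at hw; exact Nat.lt_irrefl 0 hw
      · exact hsub w (dpos w u (by rw [hsymm]; exact hw))
    have hNcard5 : ∀ u ∈ W, (N u).card ≤ 5 := by
      intro u hu
      have h1 : (N u).card ≤ (W.erase u).card := Finset.card_le_card (hNsub u)
      rw [Finset.card_erase_of_mem hu, hWcard] at h1
      exact h1
    -- the GEN inequality
    have hGEN : ∀ u ∈ W,
        (N u).card * (S + 4) + 4 * d u + 2 * (∑ x ∈ (W.erase u) \ N u, d x)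
          ≤ (N u).card * (2 * d u + 2 * D) + 2 * S := by
      intro u hu
      have hstar_sum : ∑ w ∈ N u, (S + 2 * μ u w + 4) ≤ ∑ w ∈ N u, (2 * d u + 2 * d w + 2 * D) := by
        apply Finset.sum_le_sum
        intro w hw
        rw [memN] at hw
        have hne : u ≠ w := by
          intro h; rw [h, hloop] at hw; exact Nat.lt_irrefl 0 hw
        exact star u w hne hw
      have hL : ∑ w ∈ N u, (S + 2 * μ u w + 4) = (N u).card * (S + 4) + 2 * d u := by
        calc ∑ w ∈ N u, (S + 2 * μ u w + 4)
            = ∑ w ∈ N u, ((S + 4) + 2 * μ u w) := by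
              apply Finset.sum_congr rfl; intros; ring
          _ = (N u).card * (S + 4) + ∑ w ∈ N u, 2 * μ u w := by
              rw [Finset.sum_add_distrib, Finset.sum_const, smul_eq_mul]
          _ = (N u).card * (S + 4) + 2 * ∑ w ∈ N u, μ u w := by
              rw [show (∑ w ∈ N u, 2 * μ u w) = 2 * ∑ w ∈ N u, μ u w from (Finset.mul_sum _ _ _).symm]
          _ = (N u).card * (S + 4) + 2 * d u := by rw [← d_eq_sumN]
      have hR : ∑ w ∈ N u, (2 * d u + 2 * d w + 2 * D)
          = (N u).card * (2 * d u + 2 * D) + 2 * ∑ w ∈ N u, d w := by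
        calc ∑ w ∈ N u, (2 * d u + 2 * d w + 2 * D)
            = ∑ w ∈ N u, ((2 * d u + 2 * D) + 2 * d w) := by
              apply Finset.sum_congr rfl; intros; ring
          _ = (N u).card * (2 * d u + 2 * D) + ∑ w ∈ N u, 2 * d w := by
              rw [Finset.sum_add_distrib, Finset.sum_const, smul_eq_mul]
          _ = (N u).card * (2 * d u + 2 * D) + 2 * ∑ w ∈ N u, d w := by
              rw [show (∑ w ∈ N u, 2 * d w) = 2 * ∑ w ∈ N u, d w from (Finset.mul_sum _ _ _).symm]
      rw [hL, hR] at hstar_sum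
      have hpart : ∑ x ∈ (W.erase u) \ N u, d x + ∑ w ∈ N u, d w = ∑ x ∈ W.erase u, d x :=
        Finset.sum_sdiff (hNsub u)
      have herase : d u + ∑ x ∈ W.erase u, d x = ∑ x ∈ W, d x :=
        Finset.add_sum_erase W d hu
      rw [hSW] at herase
      set nn := (N u).card with hnn
      set A1 := nn * (S + 4) with hA1
      set A2 := nn * (2 * d u + 2 * D) with hA2
      omega
    -- X-set cardinalities
    have hXcard : ∀ u ∈ W, ((W.erase u) \ N u).card + (N u).card = 5 := by
      intro u hu
      have h1 : ((W.erase u) \ N u).card = (W.erase u).card - (N u).card :=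
        Finset.card_sdiff_of_subset (hNsub u)
      have h2 : (N u).card ≤ (W.erase u).card := Finset.card_le_card (hNsub u)
      rw [Finset.card_erase_of_mem hu, hWcard] at h1 h2
      omega
    by_cases hm3 : ∃ m ∈ W, (N m).card = 3
    · -- some vertex with exactly 3 neighbours
      obtain ⟨m, hmW, hm⟩ := hm3
      have hXm2 : ((W.erase m) \ N m).card = 2 := by have := hXcard m hmW; omega
      obtain ⟨p, q, hpq, hXm⟩ := Finset.card_eq_two.mp hXm2
      have hpX : p ∈ (W.erase m) \ N m := by rw [hXm]; simp
      have hqX : q ∈ (W.erase m) \ N m := by rw [hXm]; simp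
      have hpW : p ∈ W := (Finset.mem_erase.mp (Finset.mem_sdiff.mp hpX).1).2
      have hqW : q ∈ W := (Finset.mem_erase.mp (Finset.mem_sdiff.mp hqX).1).2
      have hGm := hGEN m hmW
      rw [hm, hXm, Finset.sum_pair hpq] at hGm
      have hdm : d m ≤ D := hΔ m
      have hdegp := Fdeg p (hWpos p hpW)
      have hdegq := Fdeg q (hWpos q hqW)
      have key : ∀ p', p' ∈ (W.erase m) \ N m → 4 * d p' + 13 ≤ 3 * D → False := by
        intro p' hp'X hsmall
        have hp'W : p' ∈ W := (Finset.mem_erase.mp (Finset.mem_sdiff.mp hp'X).1).2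
        have hp'm : p' ≠ m := (Finset.mem_erase.mp (Finset.mem_sdiff.mp hp'X).1).1
        have hp'N : p' ∉ N m := (Finset.mem_sdiff.mp hp'X).2
        have hmu0 : μ m p' = 0 := by
          by_contra h
          exact hp'N ((memN m p').mpr (Nat.pos_of_ne_zero h))
        have hmN : m ∉ N p' := by
          rw [memN, hsymm, hmu0]
          exact Nat.lt_irrefl 0
        have hp'pos := hWpos p' hp'W
        have h3le := F2 p' hp'pos
        have hne3 : (N p').card ≠ 3 := by
          intro h
          have := F3 p' hp'pos h
          omega
        have hmem' : m ∈ W.erase p' := Finset.mem_erase.mpr ⟨fun h => hp'm h.symm, hmW⟩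
        have hle4 : (N p').card ≤ 4 := by
          have hsub4 : N p' ⊆ (W.erase p').erase m := by
            intro w hw
            rw [Finset.mem_erase]
            exact ⟨by rintro rfl; exact hmN hw, hNsub p' hw⟩
          have hc := Finset.card_le_card hsub4
          rw [Finset.card_erase_of_mem hmem', Finset.card_erase_of_mem hp'W, hWcard] at hc
          omega
        have hn4 : (N p').card = 4 := by omega
        have hXp1 : ((W.erase p') \ N p').card = 1 := by have := hXcard p' hp'W; omega
        obtain ⟨x, hx⟩ := Finset.card_eq_one.mp hXp1
        have hmX : m ∈ (W.erase p') \ N p' := by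
          rw [Finset.mem_sdiff]
          exact ⟨hmem', hmN⟩
        have hxm : (W.erase p') \ N p' = {m} := by
          rw [hx] at hmX ⊢
          rw [Finset.mem_singleton] at hmX
          rw [hmX]
        have hGp := hGEN p' hp'W
        rw [hn4, hxm, Finset.sum_singleton] at hGp
        have hdegm := Fdeg m (hWpos m hmW)
        have hdp' : d p' ≤ D := hΔ p'
        omega
      rcases le_total (d p) (d q) with hle | hle
      · exact key p hpX (by omega)
      · exact key q hqX (by omega)
    by_cases hm4 : ∃ u ∈ W, (N u).card = 4
    · -- some vertex with exactly 4 neighbours (and none with 3)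
      obtain ⟨u, huW, hu4⟩ := hm4
      have hXu1 : ((W.erase u) \ N u).card = 1 := by have := hXcard u huW; omega
      obtain ⟨x0, hx0⟩ := Finset.card_eq_one.mp hXu1
      have hpX : x0 ∈ (W.erase u) \ N u := by rw [hx0]; simp
      set p := x0 with hp_def
      have hpW : p ∈ W := (Finset.mem_erase.mp (Finset.mem_sdiff.mp hpX).1).2
      have hpu : p ≠ u := (Finset.mem_erase.mp (Finset.mem_sdiff.mp hpX).1).1
      have hpN : p ∉ N u := (Finset.mem_sdiff.mp hpX).2
      have hmu0 : μ u p = 0 := by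
        by_contra h
        exact hpN ((memN u p).mpr (Nat.pos_of_ne_zero h))
      have huN : u ∉ N p := by
        rw [memN, hsymm, hmu0]
        exact Nat.lt_irrefl 0
      have hppos := hWpos p hpW
      have h3le := F2 p hppos
      have hne3 : (N p).card ≠ 3 := fun h => hm3 ⟨p, hpW, h⟩
      have hmem' : u ∈ W.erase p := Finset.mem_erase.mpr ⟨fun h => hpu h.symm, huW⟩
      have hle4 : (N p).card ≤ 4 := by
        have hsub4 : N p ⊆ (W.erase p).erase u := by
          intro w hw
          rw [Finset.mem_erase]
          exact ⟨by rintro rfl; exact huN hw, hNsub p hw⟩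
        have hc := Finset.card_le_card hsub4
        rw [Finset.card_erase_of_mem hmem', Finset.card_erase_of_mem hpW, hWcard] at hc
        omega
      have hn4 : (N p).card = 4 := by omega
      have hXp1 : ((W.erase p) \ N p).card = 1 := by have := hXcard p hpW; omega
      obtain ⟨x, hx⟩ := Finset.card_eq_one.mp hXp1
      have huX : u ∈ (W.erase p) \ N p := by
        rw [Finset.mem_sdiff]
        exact ⟨hmem', huN⟩
      have hxu : (W.erase p) \ N p = {u} := by
        rw [hx] at huX ⊢
        rw [Finset.mem_singleton] at huX
        rw [huX]
      have hGu := hGEN u huW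
      rw [hu4, hx0, Finset.sum_singleton] at hGu
      have hGp := hGEN p hpW
      rw [hn4, hxu, Finset.sum_singleton] at hGp
      have hdu : d u ≤ D := hΔ u
      have hdp : d p ≤ D := hΔ p
      omega
    · -- all six vertices have 5 neighbours
      have h5 : ∀ u ∈ W, (N u).card = 5 := by
        intro u hu
        have h3le := F2 u (hWpos u hu)
        have h5le := hNcard5 u hu
        have hne3 : (N u).card ≠ 3 := fun h => hm3 ⟨u, hu, h⟩
        have hne4 : (N u).card ≠ 4 := fun h => hm4 ⟨u, hu, h⟩
        omega
      have hX0 : ∀ u ∈ W, ((W.erase u) \ N u) = ∅ := by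
        intro u hu
        have h1 := hXcard u hu
        rw [h5 u hu] at h1
        exact Finset.card_eq_zero.mp (by omega)
      have ma1 : a1 ∈ W := by rw [hmemW]; exact Or.inl rfl
      have mb1 : b1 ∈ W := by rw [hmemW]; exact Or.inr (Or.inl rfl)
      have ma2 : a2 ∈ W := by rw [hmemW]; exact Or.inr (Or.inr (Or.inl rfl))
      have mb2 : b2 ∈ W := by rw [hmemW]; exact Or.inr (Or.inr (Or.inr (Or.inl rfl)))
      have ma3 : a3 ∈ W := by rw [hmemW]; exact Or.inr (Or.inr (Or.inr (Or.inr (Or.inl rfl))))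
      have mb3 : b3 ∈ W := by rw [hmemW]; exact Or.inr (Or.inr (Or.inr (Or.inr (Or.inr rfl))))
      have g1 := hGEN a1 ma1
      rw [h5 a1 ma1, hX0 a1 ma1, Finset.sum_empty] at g1
      have g2 := hGEN b1 mb1
      rw [h5 b1 mb1, hX0 b1 mb1, Finset.sum_empty] at g2
      have g3 := hGEN a2 ma2
      rw [h5 a2 ma2, hX0 a2 ma2, Finset.sum_empty] at g3
      have g4 := hGEN b2 mb2
      rw [h5 b2 mb2, hX0 b2 mb2, Finset.sum_empty] at g4
      have g5 := hGEN a3 ma3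
      rw [h5 a3 ma3, hX0 a3 ma3, Finset.sum_empty] at g5
      have g6 := hGEN b3 mb3
      rw [h5 b3 mb3, hX0 b3 mb3, Finset.sum_empty] at g6
      have hsum6 : d a1 + d b1 + d a2 + d b2 + d a3 + d b3 = S := by
        rw [← hWsum]
        exact hSW
      omega
  · -- Case A : no 3-matching
    have hS0 : (∑ v : V, d v) ≠ 0 := by rw [← hS_def]; omega
    obtain ⟨v0, _, hv0⟩ := Finset.exists_ne_zero_of_sum_ne_zero hS0
    have hdv0 : 0 < d v0 := Nat.pos_of_ne_zero hv0
    obtain ⟨w0, hw0ne, hw0⟩ := exists_nbr v0 hdv0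
    have hw0N : w0 ∈ N v0 := (memN v0 w0).mpr hw0
    have hcv0 := F2 v0 hdv0
    have hx0ex : ((N v0).erase w0).Nonempty := by
      rw [← Finset.card_pos, Finset.card_erase_of_mem hw0N]
      omega
    obtain ⟨x0, hx0⟩ := hx0ex
    have hx0w0 : x0 ≠ w0 := (Finset.mem_erase.mp hx0).1
    have hx0N : x0 ∈ N v0 := (Finset.mem_erase.mp hx0).2
    have hx0mu : 0 < μ v0 x0 := (memN v0 x0).mp hx0N
    have hx0v0 : x0 ≠ v0 := fun h => selfN v0 (h ▸ hx0N)
    have hdw0 : 0 < d w0 := dpos w0 v0 (by rw [hsymm]; exact hw0)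
    have hcw0 := F2 w0 hdw0
    have hy0ex : (((N w0).erase v0).erase x0).Nonempty := by
      rw [← Finset.card_pos]
      have e1' : (N w0).card - 1 ≤ ((N w0).erase v0).card := Finset.pred_card_le_card_erase
      have e2' : ((N w0).erase v0).card - 1 ≤ (((N w0).erase v0).erase x0).card :=
        Finset.pred_card_le_card_erase
      omega
    obtain ⟨y0, hy0⟩ := hy0ex
    have hy0x0 : y0 ≠ x0 := (Finset.mem_erase.mp hy0).1
    have hy0' := (Finset.mem_erase.mp hy0).2
    have hy0v0 : y0 ≠ v0 := (Finset.mem_erase.mp hy0').1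
    have hy0N : y0 ∈ N w0 := (Finset.mem_erase.mp hy0').2
    have hy0mu : 0 < μ w0 y0 := (memN w0 y0).mp hy0N
    have hy0w0 : y0 ≠ w0 := fun h => selfN w0 (h ▸ hy0N)
    set Wset : Finset V := {v0, x0, w0, y0} with hWs_def
    have hmemWs : ∀ t : V, t ∈ Wset ↔ (t = v0 ∨ t = x0 ∨ t = w0 ∨ t = y0) := by
      intro t; simp [hWs_def]
    have htwo : ∀ z α β : V, 3 ≤ (N z).card → (∀ t ∈ N z, t = α ∨ t = β) → False := by
      intro z α β hcard hmem
      have hsub2 : N z ⊆ {α, β} := by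
        intro t ht
        rw [Finset.mem_insert, Finset.mem_singleton]
        exact hmem t ht
      have hc := Finset.card_le_card hsub2
      have hc2 : ({α, β} : Finset V).card ≤ 2 :=
        (Finset.card_insert_le _ _).trans (by simp)
      omega
    have hNz : ∀ z : V, 0 < d z → z ∉ Wset → N z ⊆ Wset := by
      intro z hz hzW t ht
      by_contra htW
      rw [hmemWs] at hzW htW
      push_neg at hzW htW
      have htz : 0 < μ z t := (memN z t).mp ht
      have hzt : z ≠ t := fun h => selfN t (h ▸ ht)
      exact h3M ⟨z, t, v0, x0, w0, y0,
        ⟨hzt, hzW.1, hzW.2.1, hzW.2.2.1, hzW.2.2.2,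
          htW.1, htW.2.1, htW.2.2.1, htW.2.2.2,
          Ne.symm hx0v0, Ne.symm hw0ne, Ne.symm hy0v0, hx0w0, Ne.symm hy0x0, Ne.symm hy0w0⟩,
        htz, hx0mu, hy0mu⟩
    have huniq : ∀ z1 z2 : V, 0 < d z1 → z1 ∉ Wset → 0 < d z2 → z2 ∉ Wset → z1 = z2 := by
      intro z1 z2 hz1 hz1W hz2 hz2W
      by_contra hne
      have hN1 := hNz z1 hz1 hz1W
      have hN2 := hNz z2 hz2 hz2W
      have hc1 := F2 z1 hz1
      have hc2 := F2 z2 hz2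
      have hz1W' : z1 ≠ v0 ∧ z1 ≠ x0 ∧ z1 ≠ w0 ∧ z1 ≠ y0 := by
        rw [hmemWs] at hz1W; push_neg at hz1W; exact hz1W
      have hz2W' : z2 ≠ v0 ∧ z2 ≠ x0 ∧ z2 ≠ w0 ∧ z2 ≠ y0 := by
        rw [hmemWs] at hz2W; push_neg at hz2W; exact hz2W
      have hcov : (v0 ∈ N z1 ∧ x0 ∈ N z1) ∨ (w0 ∈ N z1 ∧ y0 ∈ N z1) := by
        by_contra hc
        push_neg at hc
        have m1 : v0 ∉ N z1 ∨ x0 ∉ N z1 := by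
          by_cases h : v0 ∈ N z1
          · exact Or.inr (hc.1 h)
          · exact Or.inl h
        have m2 : w0 ∉ N z1 ∨ y0 ∉ N z1 := by
          by_cases h : w0 ∈ N z1
          · exact Or.inr (hc.2 h)
          · exact Or.inl h
        rcases m1 with m1 | m1 <;> rcases m2 with m2 | m2
        · refine htwo z1 x0 y0 hc1 ?_
          intro t ht
          have h := hN1 ht
          rw [hmemWs] at h
          rcases h with rfl | rfl | rfl | rfl
          exacts [absurd ht m1, Or.inl rfl, absurd ht m2, Or.inr rfl]
        · refine htwo z1 x0 w0 hc1 ?_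
          intro t ht
          have h := hN1 ht
          rw [hmemWs] at h
          rcases h with rfl | rfl | rfl | rfl
          exacts [absurd ht m1, Or.inl rfl, Or.inr rfl, absurd ht m2]
        · refine htwo z1 v0 y0 hc1 ?_
          intro t ht
          have h := hN1 ht
          rw [hmemWs] at h
          rcases h with rfl | rfl | rfl | rfl
          exacts [Or.inl rfl, absurd ht m1, absurd ht m2, Or.inr rfl]
        · refine htwo z1 v0 w0 hc1 ?_
          intro t ht
          have h := hN1 ht
          rw [hmemWs] at h
          rcases h with rfl | rfl | rfl | rfl
          exacts [Or.inl rfl, absurd ht m1, Or.inr rfl, absurd ht m2]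
      rcases hcov with ⟨hm1, hm2⟩ | ⟨hm1, hm2⟩
      · by_cases hz2v : v0 ∈ N z2
        · exact h3M ⟨z1, x0, z2, v0, w0, y0,
            ⟨hz1W'.2.1, hne, hz1W'.1, hz1W'.2.2.1, hz1W'.2.2.2,
              Ne.symm hz2W'.2.1, hx0v0, hx0w0, Ne.symm hy0x0,
              hz2W'.1, hz2W'.2.2.1, hz2W'.2.2.2,
              Ne.symm hw0ne, Ne.symm hy0v0, Ne.symm hy0w0⟩,
            (memN z1 x0).mp hm2, (memN z2 v0).mp hz2v, hy0mu⟩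
        by_cases hz2x : x0 ∈ N z2
        · exact h3M ⟨z1, v0, z2, x0, w0, y0,
            ⟨hz1W'.1, hne, hz1W'.2.1, hz1W'.2.2.1, hz1W'.2.2.2,
              Ne.symm hz2W'.1, Ne.symm hx0v0, Ne.symm hw0ne, Ne.symm hy0v0,
              hz2W'.2.1, hz2W'.2.2.1, hz2W'.2.2.2,
              hx0w0, Ne.symm hy0x0, Ne.symm hy0w0⟩,
            (memN z1 v0).mp hm1, (memN z2 x0).mp hz2x, hy0mu⟩
        · refine htwo z2 w0 y0 hc2 ?_
          intro t ht
          have h := hN2 ht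
          rw [hmemWs] at h
          rcases h with rfl | rfl | rfl | rfl
          exacts [absurd ht hz2v, absurd ht hz2x, Or.inl rfl, Or.inr rfl]
      · by_cases hz2w : w0 ∈ N z2
        · exact h3M ⟨z1, y0, z2, w0, v0, x0,
            ⟨hz1W'.2.2.2, hne, hz1W'.2.2.1, hz1W'.1, hz1W'.2.1,
              Ne.symm hz2W'.2.2.2, hy0w0, hy0v0, hy0x0,
              hz2W'.2.2.1, hz2W'.1, hz2W'.2.1,
              hw0ne, Ne.symm hx0w0, Ne.symm hx0v0⟩,
            (memN z1 y0).mp hm2, (memN z2 w0).mp hz2w, hx0mu⟩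
        by_cases hz2y : y0 ∈ N z2
        · exact h3M ⟨z1, w0, z2, y0, v0, x0,
            ⟨hz1W'.2.2.1, hne, hz1W'.2.2.2, hz1W'.1, hz1W'.2.1,
              Ne.symm hz2W'.2.2.1, Ne.symm hy0w0, hw0ne, Ne.symm hx0w0,
              hz2W'.2.2.2, hz2W'.1, hz2W'.2.1,
              hy0v0, hy0x0, Ne.symm hx0v0⟩,
            (memN z1 w0).mp hm1, (memN z2 y0).mp hz2y, hx0mu⟩
        · refine htwo z2 v0 x0 hc2 ?_
          intro t ht
          have h := hN2 ht
          rw [hmemWs] at h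
          rcases h with rfl | rfl | rfl | rfl
          exacts [Or.inl rfl, Or.inr rfl, absurd ht hz2w, absurd ht hz2y]
    -- now bound S by 5 * D
    have hWscard : Wset.card ≤ 4 := by
      have h1 := Finset.card_insert_le v0 ({x0, w0, y0} : Finset V)
      have h2 := Finset.card_insert_le x0 ({w0, y0} : Finset V)
      have h3 := Finset.card_insert_le w0 ({y0} : Finset V)
      have h4 : ({y0} : Finset V).card = 1 := Finset.card_singleton y0
      rw [hWs_def]
      omega
    by_cases hzex : ∃ z : V, 0 < d z ∧ z ∉ Wset
    · obtain ⟨z0, hz0, hz0W⟩ := hzex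
      have hout : ∀ t : V, t ∉ insert z0 Wset → d t = 0 := by
        intro t ht
        by_contra h
        have h' : 0 < d t := Nat.pos_of_ne_zero h
        rw [Finset.mem_insert] at ht
        push_neg at ht
        exact ht.1 (huniq t z0 h' ht.2 hz0 hz0W)
      have hSU : S = ∑ u ∈ insert z0 Wset, d u := by
        rw [hS_def]
        exact (Finset.sum_subset (Finset.subset_univ _) (fun x _ hx => hout x hx)).symm
      have hcard5 : (insert z0 Wset).card ≤ 5 := by
        have h1 := Finset.card_insert_le z0 Wset
        omega
      have hle : ∑ u ∈ insert z0 Wset, d u ≤ (insert z0 Wset).card * D := by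
        have := Finset.sum_le_card_nsmul (insert z0 Wset) d D (fun x _ => hΔ x)
        rw [smul_eq_mul] at this
        exact this
      have hfin : S ≤ 5 * D := by
        rw [hSU]
        exact hle.trans (Nat.mul_le_mul_right D hcard5)
      omega
    · push_neg at hzex
      have hout : ∀ t : V, t ∉ Wset → d t = 0 := by
        intro t ht
        by_contra h
        exact ht (hzex t (Nat.pos_of_ne_zero h))
      have hSU : S = ∑ u ∈ Wset, d u := by
        rw [hS_def]
        exact (Finset.sum_subset (Finset.subset_univ _) (fun x _ hx => hout x hx)).symm
      have hle : ∑ u ∈ Wset, d u ≤ Wset.card * D := by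
        have := Finset.sum_le_card_nsmul Wset d D (fun x _ => hΔ x)
        rw [smul_eq_mul] at this
        exact this
      have hfin : S ≤ 5 * D := by
        rw [hSU]
        refine hle.trans ?_
        have : Wset.card * D ≤ 4 * D := Nat.mul_le_mul_right D hWscard
        omega
      omega
end

section
/- Let D be a positive integer and let H be a multigraph on a finite vertex set in which every vertex has positive degree and 2·|E(H)| > 5·D. If every edge of H shares at least one endpoint with all but at most D−2 other edges of H (i.e., for every edge vw, the number of edges of H with both endpoints outside {v,w} is at most D−2), then the underlying simple graph H₀ of H is connected. -/
/-!
If `H₀` were disconnected, let `S` be the component of some vertex. No edge of `H` crosses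
between `S` and its complement, so `2·|E(H)|` splits into the edge counts inside `S` and inside
the complement. Every vertex has an edge, so both sides contain an edge; an edge inside `S` misses
every edge of the complement and vice versa, so each side has at most `D - 2` edges. Then
`2·|E(H)| ≤ 4D - 8 < 5D`.
-/

open scoped Classical

/-- The underlying simple graph of a multigraph with multiplicity function `μ`:
`v` is adjacent to `w` iff `v ≠ w` and `μ(v,w) > 0`. -/
def underlying {V : Type*} (μ : V → V → ℕ) : SimpleGraph V where
  Adj v w := v ≠ w ∧ 0 < μ v w ∧ 0 < μ w v
  symm := ⟨by rintro v w ⟨h1, h2, h3⟩; exact ⟨h1.symm, h3, h2⟩⟩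
  loopless := ⟨by rintro v ⟨h, -⟩; exact h rfl⟩

namespace Finset

variable {α M : Type*}

theorem sum_sum_le_sum_sum_of_subset [AddCommMonoid M] [PartialOrder M] [CanonicallyOrderedAdd M]
    (f : α → α → M) {s t : Finset α} (h : s ⊆ t) :
    ∑ x ∈ s, ∑ y ∈ s, f x y ≤ ∑ x ∈ t, ∑ y ∈ t, f x y := by
  simpa only [Finset.sum_product] using
    Finset.sum_le_sum_of_subset (f := fun p : α × α => f p.1 p.2) (product_subset_product h h)

theorem sum_sum_eq_add_of_eq_zero_of_mem_of_notMem [Fintype α] [AddCommMonoid M]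
    (f : α → α → M) (s : Finset α) (hs : ∀ x ∈ s, ∀ y ∉ s, f x y = 0)
    (hsc : ∀ x ∉ s, ∀ y ∈ s, f x y = 0) :
    ∑ x, ∑ y, f x y = ∑ x ∈ s, ∑ y ∈ s, f x y + ∑ x ∈ sᶜ, ∑ y ∈ sᶜ, f x y := by
  rw [← sum_add_sum_compl s]
  congr 1
  · refine sum_congr rfl fun x hx => (sum_subset (subset_univ s) fun y _ hy => hs x hx y hy).symm
  · refine sum_congr rfl fun x hx => (sum_subset (subset_univ sᶜ) fun y _ hy => ?_).symm
    exact hsc x (mem_compl.mp hx) y (by simpa using hy)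

end Finset

section Multigraph

variable {V : Type*} {μ : V → V → ℕ}

theorem underlying_reachable_of_pos (hsymm : ∀ v w : V, μ v w = μ w v) {v w : V}
    (h : 0 < μ v w) : (underlying μ).Reachable v w := by
  by_cases hvw : v = w
  · exact hvw ▸ SimpleGraph.Reachable.refl v
  · exact SimpleGraph.Adj.reachable ⟨hvw, h, hsymm v w ▸ h⟩

variable [Fintype V]

theorem exists_ne_pos_of_degree_pos (hloop : ∀ v : V, μ v v = 0) {v : V}
    (hv : 0 < ∑ w, μ v w) : ∃ w, v ≠ w ∧ 0 < μ v w := by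
  obtain ⟨w, -, hw⟩ := Finset.exists_ne_zero_of_sum_ne_zero hv.ne'
  exact ⟨w, fun h => hw (h ▸ hloop v), Nat.pos_of_ne_zero hw⟩

theorem sum_sum_add_four_le_of_edge_notMem {D : ℕ}
    (hshare : ∀ v w : V, v ≠ w → 0 < μ v w →
      (∑ x ∈ Finset.univ \ {v, w}, ∑ y ∈ Finset.univ \ {v, w}, μ x y) + 4 ≤ 2 * D)
    {s : Finset V} {v w : V} (hvw : v ≠ w) (hμ : 0 < μ v w) (hv : v ∉ s) (hw : w ∉ s) :
    ∑ x ∈ s, ∑ y ∈ s, μ x y + 4 ≤ 2 * D := by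
  have hsub : s ⊆ Finset.univ \ {v, w} := fun x hx => by
    simp only [Finset.mem_sdiff, Finset.mem_univ, Finset.mem_insert, Finset.mem_singleton,
      true_and]
    rintro (rfl | rfl) <;> contradiction
  have := Finset.sum_sum_le_sum_sum_of_subset μ hsub
  have := hshare v w hvw hμ
  omega

end Multigraph

theorem multigraph_connected_general {V : Type*} [Fintype V] (D : ℕ)
    (μ : V → V → ℕ)
    (hsymm : ∀ v w : V, μ v w = μ w v)
    (hloop : ∀ v : V, μ v v = 0)
    (hpos : ∀ v : V, 0 < ∑ w : V, μ v w)
    (hbig : 5 * D < ∑ v : V, ∑ w : V, μ v w)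
    (hshare : ∀ v w : V, v ≠ w → 0 < μ v w →
      (∑ x ∈ Finset.univ \ {v, w}, ∑ y ∈ Finset.univ \ {v, w}, μ x y) + 4 ≤ 2 * D) :
    (underlying μ).Connected := by
  obtain ⟨v₀, -, -⟩ := Finset.exists_ne_zero_of_sum_ne_zero (Nat.zero_lt_of_lt hbig).ne'
  have : Nonempty V := ⟨v₀⟩
  refine ⟨fun u u' => by_contra fun hu' => ?_⟩
  have hreach {x y : V} : 0 < μ x y → (underlying μ).Reachable x y :=
    underlying_reachable_of_pos hsymm
  set S := Finset.univ.filter ((underlying μ).Reachable u)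
  have hcross : ∀ x ∈ S, ∀ y ∉ S, μ x y = 0 := fun x hx y hy => by
    by_contra h
    simp only [S, Finset.mem_filter, Finset.mem_univ, true_and] at hx hy
    exact hy (hx.trans (hreach (Nat.pos_of_ne_zero h)))
  obtain ⟨w, huw, hw⟩ := exists_ne_pos_of_degree_pos hloop (hpos u)
  obtain ⟨w', hu'w', hw'⟩ := exists_ne_pos_of_degree_pos hloop (hpos u')
  have hcompl_le := sum_sum_add_four_le_of_edge_notMem hshare (s := Sᶜ) huw hw
    (by simp [S]) (by simpa [S] using hreach hw)
  have hS_le := sum_sum_add_four_le_of_edge_notMem hshare (s := S) hu'w' hw'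
    (by simpa [S] using hu') (by simpa [S] using fun h => hu' (h.trans (hreach hw').symm))
  have hsplit := Finset.sum_sum_eq_add_of_eq_zero_of_mem_of_notMem μ S hcross
    fun x hx y hy => hsymm x y ▸ hcross y hy x hx
  omega

/-- Let `H` be a multigraph on a finite vertex set in which every vertex has
positive degree and `2·|E(H)| > 5·D`. If every edge of `H` shares at least one
endpoint with all but at most `D−2` other edges, then the underlying simple graph
of `H` is connected. -/
theorem multigraph_connected {V : Type*} [Fintype V] (D : ℕ) (hD : 0 < D)
    (μ : V → V → ℕ)
    (hsymm : ∀ v w : V, μ v w = μ w v)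
    (hloop : ∀ v : V, μ v v = 0)
    (hpos : ∀ v : V, 0 < ∑ w : V, μ v w)
    (hbig : 5 * D < ∑ v : V, ∑ w : V, μ v w)
    (hshare : ∀ v w : V, v ≠ w → 0 < μ v w →
      (∑ x ∈ Finset.univ \ {v, w}, ∑ y ∈ Finset.univ \ {v, w}, μ x y) + 4 ≤ 2 * D) :
    (underlying μ).Connected :=
  multigraph_connected_general D μ hsymm hloop hpos hbig hshare
end

section
/- Let D be a positive integer and let H be a multigraph on a finite vertex set with Δ(H) ≤ D and 2·|E(H)| > 5·D, such that every edge of H shares at least one endpoint with all but at most D−2 other edges of H (i.e., for every edge vw, the number of edges of H with both endpoints outside {v,w} is at most D−2). Then every vertex v with d(v) > 0 has at least 3 distinct neighbors, i.e., |{w : μ(v,w) > 0}| ≥ 3. -/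
open scoped Classical

/-- Let `H` be a multigraph on a finite vertex set with `Δ(H) ≤ D` and
`2·|E(H)| > 5·D`, such that every edge shares at least one endpoint with all but at
most `D−2` other edges. Then every vertex of positive degree has at least 3 distinct
neighbors. -/
theorem multigraph_min_three_neighbors {V : Type*} [Fintype V] (D : ℕ) (hD : 0 < D)
    (μ : V → V → ℕ)
    (hsymm : ∀ v w : V, μ v w = μ w v)
    (hloop : ∀ v : V, μ v v = 0)
    (hΔ : ∀ v : V, ∑ w : V, μ v w ≤ D)
    (hbig : 5 * D < ∑ v : V, ∑ w : V, μ v w)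
    (hshare : ∀ v w : V, v ≠ w → 0 < μ v w →
      (∑ x ∈ Finset.univ \ {v, w}, ∑ y ∈ Finset.univ \ {v, w}, μ x y) + 4 ≤ 2 * D) :
    ∀ v : V, 0 < ∑ w : V, μ v w →
      3 ≤ (Finset.univ.filter (fun w => 0 < μ v w)).card := by
  intro v hv
  by_contra hcard
  push_neg at hcard
  set N := Finset.univ.filter (fun w => 0 < μ v w) with hN
  have hNcard : N.card ≤ 2 := by omega
  have hdN : ∑ w : V, μ v w = ∑ w ∈ N, μ v w := by
    rw [hN]
    rw [Finset.sum_filter_of_ne]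
    intro x _ hx
    exact Nat.pos_of_ne_zero hx
  have hNne : N.Nonempty := by
    by_contra h
    rw [Finset.not_nonempty_iff_eq_empty] at h
    rw [hdN, h, Finset.sum_empty] at hv
    omega
  obtain ⟨w, hwN, hwmax⟩ := N.exists_max_image (fun x => μ v x) hNne
  have hw : 0 < μ v w := (Finset.mem_filter.mp hwN).2
  have hvw : v ≠ w := by
    intro h; rw [h, hloop] at hw; omega
  have hmax : ∑ x ∈ N, μ v x ≤ 2 * μ v w := by
    calc ∑ x ∈ N, μ v x ≤ N.card * μ v w :=
          Finset.sum_le_card_nsmul N _ _ (fun x hx => hwmax x hx)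
      _ ≤ 2 * μ v w := Nat.mul_le_mul_right _ hNcard
  have hsplit : ∀ f : V → ℕ,
      ∑ x : V, f x = f v + f w + ∑ x ∈ Finset.univ \ {v, w}, f x := by
    intro f
    rw [← Finset.sum_sdiff (Finset.subset_univ {v, w}), Finset.sum_pair hvw]
    ring
  have e1 : ∑ x : V, ∑ y : V, μ x y
      = (∑ y : V, μ v y) + (∑ y : V, μ w y)
        + ∑ x ∈ Finset.univ \ {v, w}, ∑ y : V, μ x y :=
    hsplit (fun x => ∑ y : V, μ x y)
  have e2 : ∑ x ∈ Finset.univ \ {v, w}, ∑ y : V, μ x y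
      = (∑ x ∈ Finset.univ \ {v, w}, μ x v) + (∑ x ∈ Finset.univ \ {v, w}, μ x w)
        + ∑ x ∈ Finset.univ \ {v, w}, ∑ y ∈ Finset.univ \ {v, w}, μ x y := by
    rw [← Finset.sum_add_distrib, ← Finset.sum_add_distrib]
    exact Finset.sum_congr rfl (fun x _ => hsplit (fun y => μ x y))
  have e3 : ∑ x : V, μ x v = μ v v + μ w v + ∑ x ∈ Finset.univ \ {v, w}, μ x v :=
    hsplit (fun x => μ x v)
  have e4 : ∑ x : V, μ x w = μ v w + μ w w + ∑ x ∈ Finset.univ \ {v, w}, μ x w :=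
    hsplit (fun x => μ x w)
  have e5 : ∑ x : V, μ x v = ∑ x : V, μ v x :=
    Finset.sum_congr rfl (fun x _ => hsymm x v)
  have e6 : ∑ x : V, μ x w = ∑ x : V, μ w x :=
    Finset.sum_congr rfl (fun x _ => hsymm x w)
  have hS := hshare v w hvw hw
  have h1 := hΔ v
  have h2 := hΔ w
  have hsv := hsymm w v
  have hlv := hloop v
  have hlw := hloop w
  rw [hdN] at h1 hv
  omega
end

section
/- Let D be a positive integer and let H be a multigraph on a finite vertex set with 2·|E(H)| ≥ 5·D, such that every edge of H shares at least one endpoint with all but at most D−2 other edges of H (i.e., for every edge vw, the number of edges of H with both endpoints outside {v,w} is at most D−2). Then for all four distinct vertices v, w, x, y with μ(v,w) > 0 and μ(x,y) > 0, we have 2·(μ(v,x) + μ(v,y) + μ(w,x) + μ(w,y)) ≥ D + 4. -/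
open scoped Classical

/-- Let `H` be a multigraph on a finite vertex set with `2·|E(H)| ≥ 5·D`, such that
every edge shares at least one endpoint with all but at most `D−2` other edges. Then
for all four distinct vertices `v, w, x, y` with `μ(v,w) > 0` and `μ(x,y) > 0`, we
have `2·(μ(v,x) + μ(v,y) + μ(w,x) + μ(w,y)) ≥ D + 4`. -/
theorem multigraph_cross_multiplicity {V : Type*} [Fintype V] (D : ℕ) (hD : 0 < D)
    (μ : V → V → ℕ)
    (hsymm : ∀ v w : V, μ v w = μ w v)
    (hloop : ∀ v : V, μ v v = 0)
    (hbig : 5 * D ≤ ∑ v : V, ∑ w : V, μ v w)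
    (hshare : ∀ v w : V, v ≠ w → 0 < μ v w →
      (∑ x ∈ Finset.univ \ {v, w}, ∑ y ∈ Finset.univ \ {v, w}, μ x y) + 4 ≤ 2 * D) :
    ∀ v w x y : V, v ≠ w → v ≠ x → v ≠ y → w ≠ x → w ≠ y → x ≠ y →
      0 < μ v w → 0 < μ x y →
      D + 4 ≤ 2 * (μ v x + μ v y + μ w x + μ w y) := by
  intro v w x y hvw hvx hvy hwx hwy hxy hμvw hμxy
  -- generic splitting lemma
  have split : ∀ (a b : V), a ≠ b → ∀ f : V → ℕ,
      ∑ u, f u = (∑ u ∈ Finset.univ \ {a, b}, f u) + f a + f b := by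
    intro a b hab f
    rw [← Finset.sum_sdiff (Finset.subset_univ ({a, b} : Finset V)),
      Finset.sum_pair hab]
    ring
  -- key identity: A_ab + 2(d a + d b) = S + 2 μ a b
  have key : ∀ a b : V, a ≠ b →
      (∑ p ∈ Finset.univ \ {a, b}, ∑ q ∈ Finset.univ \ {a, b}, μ p q)
        + 2 * ((∑ u, μ a u) + (∑ u, μ b u))
      = (∑ p : V, ∑ q : V, μ p q) + 2 * μ a b := by
    intro a b hab
    have colA : (∑ u, μ u a) = ∑ u, μ a u :=
      Finset.sum_congr rfl fun u _ => hsymm u a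
    have colB : (∑ u, μ u b) = ∑ u, μ b u :=
      Finset.sum_congr rfl fun u _ => hsymm u b
    have h1 : (∑ p : V, ∑ q : V, μ p q)
        = (∑ p ∈ Finset.univ \ {a, b}, ∑ q : V, μ p q)
          + (∑ q : V, μ a q) + (∑ q : V, μ b q) :=
      split a b hab _
    have h3 : (∑ p ∈ Finset.univ \ {a, b}, ∑ q : V, μ p q)
        = (∑ p ∈ Finset.univ \ {a, b}, ∑ q ∈ Finset.univ \ {a, b}, μ p q)
          + (∑ p ∈ Finset.univ \ {a, b}, μ p a)
          + (∑ p ∈ Finset.univ \ {a, b}, μ p b) := by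
      have h2 : ∀ p ∈ Finset.univ \ {a, b},
          (∑ q : V, μ p q)
            = (∑ q ∈ Finset.univ \ {a, b}, μ p q) + μ p a + μ p b :=
        fun p _ => split a b hab _
      rw [Finset.sum_congr rfl h2, Finset.sum_add_distrib, Finset.sum_add_distrib]
    have h4 : (∑ u, μ u a)
        = (∑ p ∈ Finset.univ \ {a, b}, μ p a) + μ a a + μ b a :=
      split a b hab _
    have h5 : (∑ u, μ u b)
        = (∑ p ∈ Finset.univ \ {a, b}, μ p b) + μ a b + μ b b :=
      split a b hab _
    have hla := hloop a
    have hlb := hloop b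
    have hba := hsymm b a
    omega
  -- instantiate the two key identities and the hypothesis `hshare`
  have keyvw := key v w hvw
  have keyxy := key x y hxy
  have hsvw := hshare v w hvw hμvw
  have hsxy := hshare x y hxy hμxy
  -- splitting inside T = univ \ {v,w}
  have hxT : x ∈ Finset.univ \ ({v, w} : Finset V) := by
    simp [Finset.mem_sdiff, hvx.symm, hwx.symm]
  have hyT : y ∈ Finset.univ \ ({v, w} : Finset V) := by
    simp [Finset.mem_sdiff, hvy.symm, hwy.symm]
  have hsub : ({x, y} : Finset V) ⊆ Finset.univ \ ({v, w} : Finset V) := by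
    intro z hz
    rcases Finset.mem_insert.1 hz with rfl | hz
    · exact hxT
    · rw [Finset.mem_singleton] at hz; subst hz; exact hyT
  have splitT : ∀ f : V → ℕ,
      (∑ u ∈ Finset.univ \ ({v, w} : Finset V), f u)
        = (∑ u ∈ (Finset.univ \ ({v, w} : Finset V)) \ {x, y}, f u) + f x + f y := by
    intro f
    rw [← Finset.sum_sdiff hsub, Finset.sum_pair hxy]
    ring
  -- lower bound for A_vw
  have b1 : (∑ p ∈ Finset.univ \ {v, w}, ∑ q ∈ Finset.univ \ {v, w}, μ p q)
      = (∑ p ∈ (Finset.univ \ ({v, w} : Finset V)) \ {x, y},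
          ∑ q ∈ Finset.univ \ {v, w}, μ p q)
        + (∑ q ∈ Finset.univ \ {v, w}, μ x q)
        + (∑ q ∈ Finset.univ \ {v, w}, μ y q) :=
    splitT _
  have b2 : (∑ p ∈ (Finset.univ \ ({v, w} : Finset V)) \ {x, y}, (μ p x + μ p y))
      ≤ ∑ p ∈ (Finset.univ \ ({v, w} : Finset V)) \ {x, y},
          ∑ q ∈ Finset.univ \ {v, w}, μ p q := by
    apply Finset.sum_le_sum
    intro p _
    have := splitT (fun q => μ p q)
    omega
  have b2' : (∑ p ∈ (Finset.univ \ ({v, w} : Finset V)) \ {x, y}, (μ p x + μ p y))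
      = (∑ p ∈ (Finset.univ \ ({v, w} : Finset V)) \ {x, y}, μ p x)
        + (∑ p ∈ (Finset.univ \ ({v, w} : Finset V)) \ {x, y}, μ p y) :=
    Finset.sum_add_distrib
  have b3 : (∑ p ∈ Finset.univ \ ({v, w} : Finset V), μ p x)
      = (∑ p ∈ (Finset.univ \ ({v, w} : Finset V)) \ {x, y}, μ p x) + μ x x + μ y x :=
    splitT _
  have b4 : (∑ p ∈ Finset.univ \ ({v, w} : Finset V), μ p y)
      = (∑ p ∈ (Finset.univ \ ({v, w} : Finset V)) \ {x, y}, μ p y) + μ x y + μ y y :=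
    splitT _
  have colTx : (∑ p ∈ Finset.univ \ ({v, w} : Finset V), μ p x)
      = ∑ p ∈ Finset.univ \ ({v, w} : Finset V), μ x p :=
    Finset.sum_congr rfl fun p _ => hsymm p x
  have colTy : (∑ p ∈ Finset.univ \ ({v, w} : Finset V), μ p y)
      = ∑ p ∈ Finset.univ \ ({v, w} : Finset V), μ y p :=
    Finset.sum_congr rfl fun p _ => hsymm p y
  -- relate rows over T to full degrees
  have dx : (∑ u, μ x u)
      = (∑ u ∈ Finset.univ \ ({v, w} : Finset V), μ x u) + μ x v + μ x w :=
    split v w hvw _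
  have dy : (∑ u, μ y u)
      = (∑ u ∈ Finset.univ \ ({v, w} : Finset V), μ y u) + μ y v + μ y w :=
    split v w hvw _
  -- symmetry rewrites
  have s1 := hsymm x v
  have s2 := hsymm x w
  have s3 := hsymm y v
  have s4 := hsymm y w
  have s5 := hsymm y x
  have hlx := hloop x
  have hly := hloop y
  omega
end

section
/- Let D be a positive integer and let H be a multigraph on a finite vertex set with Δ(H) ≤ D and 2·|E(H)| > 5·D, in which every vertex has positive degree, and such that every edge of H shares at least one endpoint with all but at most D−2 other edges of H (i.e., for every edge vw, the number of edges of H with both endpoints outside {v,w} is at most D−2). Then for all distinct vertices v and w: 2·∑_{x∈V∖{v,w}} μ(v,x) > D, and consequently 2·μ(v,w) < D. -/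
open scoped Classical

/-- Let `H` be a multigraph on a finite vertex set with `Δ(H) ≤ D` and
`2·|E(H)| > 5·D`, in which every vertex has positive degree, and such that every
edge shares at least one endpoint with all but at most `D−2` other edges. Then for
all distinct vertices `v` and `w`: `2·∑_{x ∉ {v,w}} μ(v,x) > D`, and consequently
`2·μ(v,w) < D`. -/
theorem multigraph_spread_multiplicity {V : Type*} [Fintype V] (D : ℕ) (hD : 0 < D)
    (μ : V → V → ℕ)
    (hsymm : ∀ v w : V, μ v w = μ w v)
    (hloop : ∀ v : V, μ v v = 0)
    (hΔ : ∀ v : V, ∑ w : V, μ v w ≤ D)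
    (hpos : ∀ v : V, 0 < ∑ w : V, μ v w)
    (hbig : 5 * D < ∑ v : V, ∑ w : V, μ v w)
    (hshare : ∀ v w : V, v ≠ w → 0 < μ v w →
      (∑ x ∈ Finset.univ \ {v, w}, ∑ y ∈ Finset.univ \ {v, w}, μ x y) + 4 ≤ 2 * D) :
    ∀ v w : V, v ≠ w →
      D < 2 * ∑ x ∈ Finset.univ \ {v, w}, μ v x ∧ 2 * μ v w < D := by
  -- generic splitting of a sum over `univ` into `{v,w}` and its complement
  have hsum : ∀ v w : V, v ≠ w → ∀ f : V → ℕ,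
      ∑ x : V, f x = (∑ x ∈ Finset.univ \ {v, w}, f x) + f v + f w := by
    intro v w hvw f
    have hsub : ({v, w} : Finset V) ⊆ Finset.univ := Finset.subset_univ _
    rw [← Finset.sum_sdiff hsub, Finset.sum_pair hvw]
    ring
  -- degree of v splits as (sum outside {v,w}) + μ v w
  have hB : ∀ v w : V, v ≠ w →
      ∑ y : V, μ v y = (∑ x ∈ Finset.univ \ {v, w}, μ v x) + μ v w := by
    intro v w hvw
    rw [hsum v w hvw (μ v), hloop v]
    omega
  -- key identity: S = A + Bv + Bw + d(v) + d(w)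
  have key : ∀ v w : V, v ≠ w →
      ∑ x : V, ∑ y : V, μ x y =
        (∑ x ∈ Finset.univ \ {v, w}, ∑ y ∈ Finset.univ \ {v, w}, μ x y)
        + (∑ x ∈ Finset.univ \ {v, w}, μ v x)
        + (∑ x ∈ Finset.univ \ {v, w}, μ w x)
        + (∑ y : V, μ v y) + (∑ y : V, μ w y) := by
    intro v w hvw
    rw [hsum v w hvw (fun x => ∑ y : V, μ x y)]
    have h1 : ∑ x ∈ Finset.univ \ {v, w}, ∑ y : V, μ x y
        = ∑ x ∈ Finset.univ \ {v, w},
            ((∑ y ∈ Finset.univ \ {v, w}, μ x y) + μ x v + μ x w) :=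
      Finset.sum_congr rfl (fun x _ => hsum v w hvw (μ x))
    have h2 : ∑ x ∈ Finset.univ \ {v, w}, μ x v
        = ∑ x ∈ Finset.univ \ {v, w}, μ v x :=
      Finset.sum_congr rfl (fun x _ => (hsymm x v))
    have h3 : ∑ x ∈ Finset.univ \ {v, w}, μ x w
        = ∑ x ∈ Finset.univ \ {v, w}, μ w x :=
      Finset.sum_congr rfl (fun x _ => (hsymm x w))
    rw [h1, Finset.sum_add_distrib, Finset.sum_add_distrib, h2, h3]
  -- main estimate for an edge v x : D + 4 + 2 μ v x < 2 d(v)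
  have L : ∀ v x : V, v ≠ x → 0 < μ v x →
      D + 4 + 2 * μ v x < 2 * ∑ y : V, μ v y := by
    intro v x hvx hpos'
    have hk := key v x hvx
    have hs := hshare v x hvx hpos'
    have hdx := hΔ x
    have hdv := hΔ v
    have hBv := hB v x hvx
    have hBx := hB x v hvx.symm
    have hsymm' : μ x v = μ v x := hsymm x v
    have hBx' : (∑ y ∈ Finset.univ \ {x, v}, μ x y)
        = ∑ y ∈ Finset.univ \ {v, x}, μ x y := by
      congr 1
      rw [Finset.pair_comm]
    rw [hBx'] at hBx
    omega
  -- claim: for all v ≠ w, D + 2 μ v w < 2 d(v)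
  have C : ∀ v w : V, v ≠ w → D + 2 * μ v w < 2 * ∑ y : V, μ v y := by
    intro v w hvw
    by_cases h : 0 < μ v w
    · have := L v w hvw h
      omega
    · -- μ v w = 0; use a neighbor of v
      have hzero : μ v w = 0 := by omega
      obtain ⟨x, -, hx⟩ := Finset.exists_lt_of_sum_lt (f := fun _ : V => 0)
        (by simpa using hpos v)
      have hvx : v ≠ x := by
        intro hEq
        rw [← hEq, hloop] at hx
        exact absurd hx (lt_irrefl 0)
      have := L v x hvx hx
      omega
  intro v w hvw
  have hC := C v w hvw
  have hBv := hB v w hvw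
  have hdv := hΔ v
  constructor <;> omega
end

section
/- Let D be a positive integer and let H be a multigraph on a finite vertex set with Δ(H) ≤ D and 2·|E(H)| > 5·D, in which every vertex has positive degree, and such that every edge of H shares at least one endpoint with all but at most D−2 other edges of H (i.e., for every edge vw, the number of edges of H with both endpoints outside {v,w} is at most D−2). Then the complement of the underlying simple graph H₀ is a vertex-disjoint union of stars; that is, there are no three distinct vertices v, w, x with μ(v,w) = μ(v,x) = μ(w,x) = 0, and there are no four distinct vertices v, w, x, y with μ(v,w) = μ(w,x) = μ(x,y) = 0. -/
open scoped Classical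

section Helpers

variable {V : Type*} [Fintype V]

private lemma row_split (μ : V → V → ℕ) (v w x : V) (hvw : v ≠ w) :
    (∑ y ∈ Finset.univ \ {v, w}, μ x y) + μ x v + μ x w = ∑ y, μ x y := by
  have h := Finset.sum_sdiff (f := fun y => μ x y) (Finset.subset_univ ({v, w} : Finset V))
  rw [Finset.sum_pair hvw] at h
  beta_reduce at h
  omega

private lemma out_identity (μ : V → V → ℕ)
    (hsymm : ∀ v w : V, μ v w = μ w v) (hloop : ∀ v : V, μ v v = 0)
    (v w : V) (hvw : v ≠ w) :
    (∑ x ∈ Finset.univ \ {v, w}, ∑ y ∈ Finset.univ \ {v, w}, μ x y)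
      + 2 * (∑ y, μ v y) + 2 * (∑ y, μ w y)
      = (∑ x : V, ∑ y : V, μ x y) + 2 * μ v w := by
  have h2 : (∑ x ∈ Finset.univ \ {v, w},
      ((∑ y ∈ Finset.univ \ {v, w}, μ x y) + μ x v + μ x w))
      = ∑ x ∈ Finset.univ \ {v, w}, ∑ y, μ x y :=
    Finset.sum_congr rfl fun x _ => row_split μ v w x hvw
  rw [Finset.sum_add_distrib, Finset.sum_add_distrib] at h2
  have hcv : ∑ x ∈ Finset.univ \ {v, w}, μ x v = ∑ x ∈ Finset.univ \ {v, w}, μ v x :=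
    Finset.sum_congr rfl fun x _ => hsymm x v
  have hcw : ∑ x ∈ Finset.univ \ {v, w}, μ x w = ∑ x ∈ Finset.univ \ {v, w}, μ w x :=
    Finset.sum_congr rfl fun x _ => hsymm x w
  have h3 := row_split μ v w v hvw
  have h4 := row_split μ v w w hvw
  have h5 := Finset.sum_sdiff (f := fun x => ∑ y, μ x y)
    (Finset.subset_univ ({v, w} : Finset V))
  rw [Finset.sum_pair hvw] at h5
  beta_reduce at h2 h5
  have hvv := hloop v
  have hww := hloop w
  have hwv := hsymm w v
  omega

private lemma out_lower (μ : V → V → ℕ)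
    (hsymm : ∀ v w : V, μ v w = μ w v) (hloop : ∀ v : V, μ v v = 0)
    (a b p q : V) (hab : a ≠ b) (hpq : p ≠ q)
    (hpa : p ≠ a) (hpb : p ≠ b) (hqa : q ≠ a) (hqb : q ≠ b) :
    2 * (∑ y, μ p y) + 2 * (∑ y, μ q y)
      ≤ (∑ x ∈ Finset.univ \ {a, b}, ∑ y ∈ Finset.univ \ {a, b}, μ x y)
        + 2 * (μ p a + μ p b + μ q a + μ q b + μ p q) := by
  have hpS : p ∈ Finset.univ \ ({a, b} : Finset V) := by simp [hpa, hpb]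
  have hqS : q ∈ Finset.univ \ ({a, b} : Finset V) := by simp [hqa, hqb]
  have hsub : ({p, q} : Finset V) ⊆ Finset.univ \ ({a, b} : Finset V) :=
    Finset.insert_subset hpS (Finset.singleton_subset_iff.mpr hqS)
  have hsplit := Finset.sum_sdiff
    (f := fun x => ∑ y ∈ Finset.univ \ ({a, b} : Finset V), μ x y) hsub
  rw [Finset.sum_pair hpq] at hsplit
  have hpoint : ∀ x ∈ (Finset.univ \ ({a, b} : Finset V)) \ {p, q},
      μ x p + μ x q ≤ ∑ y ∈ Finset.univ \ ({a, b} : Finset V), μ x y := by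
    intro x _
    have h := Finset.sum_le_sum_of_subset (f := fun y => μ x y) hsub
    rwa [Finset.sum_pair hpq] at h
  have hlow := Finset.sum_le_sum hpoint
  rw [Finset.sum_add_distrib] at hlow
  have hA : ∑ x ∈ (Finset.univ \ ({a, b} : Finset V)) \ {p, q}, μ x p
      = ∑ x ∈ (Finset.univ \ ({a, b} : Finset V)) \ {p, q}, μ p x :=
    Finset.sum_congr rfl fun x _ => hsymm x p
  have hB : ∑ x ∈ (Finset.univ \ ({a, b} : Finset V)) \ {p, q}, μ x q
      = ∑ x ∈ (Finset.univ \ ({a, b} : Finset V)) \ {p, q}, μ q x :=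
    Finset.sum_congr rfl fun x _ => hsymm x q
  have hA2 := Finset.sum_sdiff (f := fun y => μ p y) hsub
  rw [Finset.sum_pair hpq] at hA2
  have hB2 := Finset.sum_sdiff (f := fun y => μ q y) hsub
  rw [Finset.sum_pair hpq] at hB2
  have hgp := row_split μ a b p hab
  have hgq := row_split μ a b q hab
  beta_reduce at hsplit hlow hA2 hB2
  have hpp := hloop p
  have hqq := hloop q
  have hqp := hsymm q p
  omega

end Helpers

/-- Let `H` be a multigraph on a finite vertex set with `Δ(H) ≤ D` and
`2·|E(H)| > 5·D`, in which every vertex has positive degree, and such that every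
edge shares at least one endpoint with all but at most `D−2` other edges. Then the
complement of the underlying simple graph is a vertex-disjoint union of stars:
there are no three distinct vertices `v, w, x` with `μ(v,w) = μ(v,x) = μ(w,x) = 0`,
and no four distinct vertices `v, w, x, y` with `μ(v,w) = μ(w,x) = μ(x,y) = 0`. -/
theorem multigraph_complement_union_of_stars {V : Type*} [Fintype V] (D : ℕ)
    (hD : 0 < D)
    (μ : V → V → ℕ)
    (hsymm : ∀ v w : V, μ v w = μ w v)
    (hloop : ∀ v : V, μ v v = 0)
    (hΔ : ∀ v : V, ∑ w : V, μ v w ≤ D)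
    (hpos : ∀ v : V, 0 < ∑ w : V, μ v w)
    (hbig : 5 * D < ∑ v : V, ∑ w : V, μ v w)
    (hshare : ∀ v w : V, v ≠ w → 0 < μ v w →
      (∑ x ∈ Finset.univ \ {v, w}, ∑ y ∈ Finset.univ \ {v, w}, μ x y) + 4 ≤ 2 * D) :
    (¬ ∃ v w x : V, v ≠ w ∧ v ≠ x ∧ w ≠ x ∧
        μ v w = 0 ∧ μ v x = 0 ∧ μ w x = 0) ∧
    (¬ ∃ v w x y : V, v ≠ w ∧ v ≠ x ∧ v ≠ y ∧ w ≠ x ∧ w ≠ y ∧ x ≠ y ∧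
        μ v w = 0 ∧ μ w x = 0 ∧ μ x y = 0) := by
  -- E : for every edge ab, 3D+5+2μab ≤ 2d(a)+2d(b)
  have hE : ∀ a b : V, 0 < μ a b →
      3 * D + 5 + 2 * μ a b ≤ 2 * (∑ y, μ a y) + 2 * (∑ y, μ b y) := by
    intro a b hab0
    have hne : a ≠ b := by
      rintro rfl
      have := hloop a
      omega
    have h1 := out_identity μ hsymm hloop a b hne
    have h2 := hshare a b hne hab0
    omega
  -- every vertex has degree at least (D+7)/2
  have hdeg : ∀ a : V, D + 7 ≤ 2 * (∑ y, μ a y) := by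
    intro a
    obtain ⟨b, -, hb⟩ := Finset.exists_ne_zero_of_sum_ne_zero
      (show (∑ y, μ a y) ≠ 0 by have := hpos a; omega)
    have hab : 0 < μ a b := Nat.pos_of_ne_zero hb
    have h := hE a b hab
    have := hΔ b
    omega
  have part1 : ¬ ∃ v w x : V, v ≠ w ∧ v ≠ x ∧ w ≠ x ∧
      μ v w = 0 ∧ μ v x = 0 ∧ μ w x = 0 := by
    rintro ⟨v, w, x, hvw, hvx, hwx, h1, h2, h3⟩
    obtain ⟨b, -, hb⟩ := Finset.exists_ne_zero_of_sum_ne_zero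
      (show (∑ y, μ v y) ≠ 0 by have := hpos v; omega)
    have hvb : 0 < μ v b := Nat.pos_of_ne_zero hb
    have hvb' : v ≠ b := by
      rintro rfl; have := hloop v; omega
    have hwb' : w ≠ b := by
      rintro rfl; omega
    have hxb' : x ≠ b := by
      rintro rfl; omega
    -- key claim, symmetric in the two non-neighbors of v
    have key : ∀ w' x' : V, w' ≠ x' → v ≠ w' → v ≠ x' → w' ≠ b → x' ≠ b →
        μ v w' = 0 → μ v x' = 0 → μ w' x' = 0 → 0 < μ w' b → False := by
      intro w' x' hwx' hvw' hvx' hwb2 hxb2 e1 e2 e3 hwb0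
      have hEvb := hE v b hvb
      have hEwb := hE w' b hwb0
      have hdb := hΔ b
      have s1 := hsymm w' v
      have s2 := hsymm x' v
      have s3 := hsymm x' w'
      by_cases hxb0 : 0 < μ x' b
      · have hSx := out_lower μ hsymm hloop x' b v w' hxb2 hvw' hvx' hvb' hwx' hwb2
        have hsh := hshare x' b hxb2 hxb0
        omega
      · have hSv := out_lower μ hsymm hloop v b w' x' hvb' hwx' hvw'.symm hwb2 hvx'.symm hxb2
        have hshv := hshare v b hvb' hvb
        have hSw := out_lower μ hsymm hloop w' b v x' hwb2 hvx' hvw' hvb' hwx'.symm hxb2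
        have hshw := hshare w' b hwb2 hwb0
        have hdx := hdeg x'
        omega
    -- b is adjacent to w or to x
    have hSv := out_lower μ hsymm hloop v b w x hvb' hwx hvw.symm hwb' hvx.symm hxb'
    have hshv := hshare v b hvb' hvb
    have hdw := hdeg w
    have hdx := hdeg x
    have hwvx : 0 < μ w b ∨ 0 < μ x b := by
      have s1 := hsymm w v
      have s2 := hsymm x v
      omega
    rcases hwvx with h | h
    · exact key w x hwx hvw hvx hwb' hxb' h1 h2 h3 h
    · exact key x w (Ne.symm hwx) hvx hvw hxb' hwb' h2 h1 (by rw [hsymm]; exact h3) h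
  refine ⟨part1, ?_⟩
  rintro ⟨v, w, x, y, hvw, hvx, hvy, hwx, hwy, hxy, e1, e2, e3⟩
  have hvx0 : 0 < μ v x := by
    by_contra h
    exact part1 ⟨v, w, x, hvw, hvx, hwx, e1, by omega, e2⟩
  have hwy0 : 0 < μ w y := by
    by_contra h
    exact part1 ⟨w, x, y, hwx, hwy, hxy, e2, by omega, e3⟩
  have hI := out_lower μ hsymm hloop v x w y hvx hwy hvw.symm hwx hvy.symm hxy.symm
  have hsh1 := hshare v x hvx hvx0
  have hII := out_lower μ hsymm hloop w y v x hwy hvx hvw hvy hwx.symm hxy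
  have hsh2 := hshare w y hwy hwy0
  have hEvx := hE v x hvx0
  have hEwy := hE w y hwy0
  have s1 := hsymm w v
  have s2 := hsymm y v
  have s3 := hsymm y x
  have s4 := hsymm x w
  have hvy0 : 0 < μ v y := by omega
  have hEvy := hE v y hvy0
  have hdv := hΔ v
  have hdy := hΔ y
  omega
end

section
/- Let D be a positive integer and let H be a multigraph on a finite vertex set with Δ(H) ≤ D and 2·|E(H)| > 5·D, in which every vertex has positive degree, and such that every edge of H shares at least one endpoint with all but at most D−2 other edges of H (i.e., for every edge vw, the number of edges of H with both endpoints outside {v,w} is at most D−2). Then the complement of the underlying simple graph H₀ is a matching; that is, for any three distinct vertices v, w, x, at least one of μ(v,w) > 0 or μ(v,x) > 0 holds (every vertex has at most one non-neighbor in H₀). -/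
open scoped Classical

private lemma key_identity {V : Type*} [Fintype V] (μ : V → V → ℕ)
    (hsymm : ∀ v w : V, μ v w = μ w v) (hloop : ∀ v : V, μ v v = 0)
    {p q : V} (hpq : p ≠ q) :
    (∑ x ∈ Finset.univ \ {p, q}, ∑ y ∈ Finset.univ \ {p, q}, μ x y)
      + 2 * (∑ y, μ p y) + 2 * (∑ y, μ q y)
      = (∑ x, ∑ y, μ x y) + 2 * μ p q := by
  have hsplit : ∀ f : V → ℕ,
      (∑ x ∈ Finset.univ \ {p, q}, f x) + (f p + f q) = ∑ x, f x := by
    intro f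
    rw [← Finset.sum_pair hpq (f := f)]
    exact Finset.sum_sdiff (Finset.subset_univ _)
  have h1 : (∑ x ∈ Finset.univ \ {p,q}, ∑ y, μ x y) + ((∑ y, μ p y) + (∑ y, μ q y))
      = ∑ x, ∑ y, μ x y := hsplit _
  have h3 : (∑ x ∈ Finset.univ \ {p,q}, ∑ y, μ x y)
      = (∑ x ∈ Finset.univ \ {p,q}, ∑ y ∈ Finset.univ \ {p,q}, μ x y)
        + ((∑ x ∈ Finset.univ \ {p,q}, μ x p) + (∑ x ∈ Finset.univ \ {p,q}, μ x q)) := by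
    rw [← Finset.sum_add_distrib, ← Finset.sum_add_distrib]
    refine Finset.sum_congr rfl fun x _ => ?_
    have := hsplit (μ x)
    omega
  have hcolp : (∑ x ∈ Finset.univ \ {p,q}, μ x p) + (μ p p + μ q p) = ∑ x, μ x p := hsplit _
  have hcolq : (∑ x ∈ Finset.univ \ {p,q}, μ x q) + (μ p q + μ q q) = ∑ x, μ x q := hsplit _
  have hcp : ∑ x, μ x p = ∑ y, μ p y := Finset.sum_congr rfl fun x _ => hsymm x p
  have hcq : ∑ x, μ x q = ∑ y, μ q y := Finset.sum_congr rfl fun x _ => hsymm x q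
  have hlp := hloop p
  have hlq := hloop q
  have hs := hsymm p q
  omega

/-- Let `H` be a multigraph on a finite vertex set with `Δ(H) ≤ D` and
`2·|E(H)| > 5·D`, in which every vertex has positive degree, and such that every
edge shares at least one endpoint with all but at most `D−2` other edges. Then the
complement of the underlying simple graph is a matching: for any three distinct
vertices `v, w, x`, at least one of `μ(v,w) > 0` or `μ(v,x) > 0` holds. -/
theorem multigraph_complement_matching {V : Type*} [Fintype V] (D : ℕ) (hD : 0 < D)
    (μ : V → V → ℕ)
    (hsymm : ∀ v w : V, μ v w = μ w v)
    (hloop : ∀ v : V, μ v v = 0)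
    (hΔ : ∀ v : V, ∑ w : V, μ v w ≤ D)
    (hpos : ∀ v : V, 0 < ∑ w : V, μ v w)
    (hbig : 5 * D < ∑ v : V, ∑ w : V, μ v w)
    (hshare : ∀ v w : V, v ≠ w → 0 < μ v w →
      (∑ x ∈ Finset.univ \ {v, w}, ∑ y ∈ Finset.univ \ {v, w}, μ x y) + 4 ≤ 2 * D) :
    ∀ v w x : V, v ≠ w → v ≠ x → w ≠ x → (0 < μ v w ∨ 0 < μ v x) := by
  intro v w x hvw hvx hwx
  by_contra hcon
  push_neg at hcon
  obtain ⟨h1', h2'⟩ := hcon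
  have h1 : μ v w = 0 := by omega
  have h2 : μ v x = 0 := by omega
  -- per-edge inequality
  have edge_ineq : ∀ p q : V, p ≠ q → 0 < μ p q →
      (∑ a, ∑ b, μ a b) + 2 * μ p q + 4 ≤ 2 * D + 2 * (∑ b, μ p b) + 2 * (∑ b, μ q b) := by
    intro p q hpq hpq'
    have hid := key_identity μ hsymm hloop hpq
    have hsh := hshare p q hpq hpq'
    omega
  have exists_nbr : ∀ p : V, ∃ q, q ≠ p ∧ 0 < μ p q := by
    intro p
    by_contra hno
    push_neg at hno
    have hz : ∑ q, μ p q = 0 := Finset.sum_eq_zero (fun q _ => by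
      by_cases hq : q = p
      · subst hq; exact hloop q
      · have := hno q hq; omega)
    have := hpos p
    omega
  have deg_lb : ∀ p : V, (∑ a, ∑ b, μ a b) + 6 ≤ 4 * D + 2 * (∑ b, μ p b) := by
    intro p
    obtain ⟨q, hqp, hq⟩ := exists_nbr p
    have h := edge_ineq p q (fun e => hqp e.symm) hq
    have := hΔ q
    omega
  -- vertex inequality
  have L3 : ∀ p : V, 3 * ((∑ a, ∑ b, μ a b) + 4) ≤ 6 * D + 4 * (∑ b, μ p b)
      + 2 * (∑ q ∈ Finset.univ.filter (fun q => 0 < μ p q), ∑ b, μ q b) := by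
    intro p
    set N := Finset.univ.filter (fun q => 0 < μ p q) with hN
    have hdsum : ∑ q ∈ N, μ p q = ∑ b, μ p b := by
      rw [hN]
      exact Finset.sum_filter_of_ne (fun x _ hx => Nat.pos_of_ne_zero hx)
    have hsum : ∑ q ∈ N, ((∑ a, ∑ b, μ a b) + 2 * μ p q + 4)
        ≤ ∑ q ∈ N, (2 * D + 2 * (∑ b, μ p b) + 2 * (∑ b, μ q b)) := by
      refine Finset.sum_le_sum fun q hq => ?_
      have hq' : 0 < μ p q := (Finset.mem_filter.mp hq).2
      have hne : p ≠ q := fun e => by rw [← e, hloop p] at hq'; omega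
      exact edge_ineq p q hne hq'
    have lhs_eq : ∑ q ∈ N, ((∑ a, ∑ b, μ a b) + 2 * μ p q + 4)
        = N.card * ((∑ a, ∑ b, μ a b) + 4) + 2 * (∑ b, μ p b) := by
      rw [Finset.sum_add_distrib, Finset.sum_add_distrib, Finset.sum_const, Finset.sum_const,
        ← Finset.mul_sum, hdsum, smul_eq_mul, smul_eq_mul]
      ring
    have rhs_eq : ∑ q ∈ N, (2 * D + 2 * (∑ b, μ p b) + 2 * (∑ b, μ q b))
        = N.card * (2 * D + 2 * (∑ b, μ p b)) + 2 * (∑ q ∈ N, (∑ b, μ q b)) := by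
      rw [Finset.sum_add_distrib, Finset.sum_const, ← Finset.mul_sum, smul_eq_mul]
    rw [lhs_eq, rhs_eq] at hsum
    have hsp : ∑ q ∈ N, (∑ b, μ q b) ≤ N.card * D := by
      calc ∑ q ∈ N, (∑ b, μ q b) ≤ ∑ _q ∈ N, D := Finset.sum_le_sum (fun q _ => hΔ q)
        _ = N.card * D := by rw [Finset.sum_const, smul_eq_mul]
    have hDp := hΔ p
    have hpp := hpos p
    by_cases h3 : 3 ≤ N.card
    · obtain ⟨k, hk⟩ := Nat.exists_eq_add_of_le h3
      rw [hk, Nat.add_mul, Nat.add_mul] at hsum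
      have h2' : 2 * D + 2 * (∑ b, μ p b) ≤ (∑ a, ∑ b, μ a b) + 4 := by omega
      have e1 : k * (2 * D + 2 * (∑ b, μ p b)) ≤ k * ((∑ a, ∑ b, μ a b) + 4) :=
        Nat.mul_le_mul_left k h2'
      omega
    · have hle : N.card ≤ 2 := by omega
      generalize hn : N.card = n at hsum hsp hle
      interval_cases n <;> omega
  -- splitting of total over {v,w,x}
  have tri_split : (∑ a ∈ Finset.univ \ {v,w,x}, (∑ b, μ a b))
      + ((∑ b, μ v b) + ((∑ b, μ w b) + (∑ b, μ x b))) = ∑ a, ∑ b, μ a b := by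
    have htr : ∑ a ∈ ({v,w,x} : Finset V), (∑ b, μ a b)
        = (∑ b, μ v b) + ((∑ b, μ w b) + (∑ b, μ x b)) := by
      rw [Finset.sum_insert (by simp [hvw, hvx]), Finset.sum_pair hwx]
    rw [← htr]
    exact Finset.sum_sdiff (Finset.subset_univ _)
  have sbound : ∀ p : V, μ p v = 0 → μ p w = 0 → μ p x = 0 →
      (∑ q ∈ Finset.univ.filter (fun q => 0 < μ p q), ∑ b, μ q b)
        ≤ ∑ a ∈ Finset.univ \ {v,w,x}, (∑ b, μ a b) := by
    intro p hpv hpw hpx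
    apply Finset.sum_le_sum_of_subset
    intro q hq
    simp only [Finset.mem_filter, Finset.mem_univ, true_and] at hq
    simp only [Finset.mem_sdiff, Finset.mem_univ, true_and, Finset.mem_insert,
      Finset.mem_singleton]
    push_neg
    refine ⟨?_, ?_, ?_⟩ <;> rintro rfl <;> omega
  have hwv : μ w v = 0 := by rw [← hsymm v w]; exact h1
  have hxv : μ x v = 0 := by rw [← hsymm v x]; exact h2
  have hsv := sbound v (hloop v) h1 h2
  have hL3v := L3 v
  by_cases hm : 0 < μ w x
  · -- w and x adjacent
    have e_wx := edge_ineq w x hwx hm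
    have hsh := hshare w x hwx hm
    -- 2 * d v ≤ outside(w,x)
    have ha2 : 2 * (∑ b, μ v b) ≤
        ∑ a ∈ Finset.univ \ {w,x}, ∑ b ∈ Finset.univ \ {w,x}, μ a b := by
      set U := Finset.univ \ ({w,x} : Finset V) with hU
      have hvU : v ∈ U := by simp [hU, hvw, hvx]
      have hrow : (∑ b ∈ U, μ v b) + (μ v w + μ v x) = ∑ b, μ v b := by
        have h := Finset.sum_sdiff (Finset.subset_univ ({w,x} : Finset V)) (f := fun b => μ v b)
        rw [Finset.sum_pair hwx] at h
        simpa [hU] using h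
      have hcol : (∑ a ∈ U, μ a v) + (μ w v + μ x v) = ∑ a, μ a v := by
        have h := Finset.sum_sdiff (Finset.subset_univ ({w,x} : Finset V)) (f := fun a => μ a v)
        rw [Finset.sum_pair hwx] at h
        simpa [hU] using h
      have e2 : ∑ a, μ a v = ∑ b, μ v b := Finset.sum_congr rfl fun a _ => hsymm a v
      have hsplit : (∑ b ∈ U, μ v b) + ∑ a ∈ U.erase v, ∑ b ∈ U, μ a b
          = ∑ a ∈ U, ∑ b ∈ U, μ a b := Finset.add_sum_erase U (fun a => ∑ b ∈ U, μ a b) hvU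
      have herase : μ v v + ∑ a ∈ U.erase v, μ a v = ∑ a ∈ U, μ a v :=
        Finset.add_sum_erase U (fun a => μ a v) hvU
      have hterm : ∑ a ∈ U.erase v, μ a v ≤ ∑ a ∈ U.erase v, ∑ b ∈ U, μ a b :=
        Finset.sum_le_sum fun a _ => Finset.single_le_sum (fun b _ => Nat.zero_le _) hvU
      have hlv := hloop v
      omega
    omega
  · -- w and x non-adjacent
    have hm0 : μ w x = 0 := by omega
    have hxw : μ x w = 0 := by rw [← hsymm w x]; exact hm0
    have hsw := sbound w hwv (hloop w) hm0
    have hsx := sbound x hxv hxw (hloop x)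
    have hL3w := L3 w
    have hL3x := L3 x
    have hdv := deg_lb v
    have hdw := deg_lb w
    have hdx := deg_lb x
    omega
end

section
/- Let D ≥ 2 and h ≥ 6 be integers, and let H be a multigraph on a vertex set of h elements whose underlying simple graph is complete, i.e., μ(v,w) > 0 for all distinct vertices v and w. If for every pair of distinct vertices v, w the number of edges of H with both endpoints outside {v,w} is at most D−2, then (h−2)·(h−3)·|E(H)| ≤ h·(h−1)·(D−2). -/
open scoped Classical

/-- Let `D ≥ 2` and `h ≥ 6`, and let `H` be a multigraph on a vertex set of `h`
elements whose underlying simple graph is complete (`μ(v,w) > 0` for all distinct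
`v, w`). If for every pair of distinct vertices `v, w` the number of edges with both
endpoints outside `{v,w}` is at most `D−2`, then
`(h−2)·(h−3)·|E(H)| ≤ h·(h−1)·(D−2)`, stated in doubled form as
`(h−2)·(h−3)·∑_{v,w} μ(v,w) ≤ 2·h·(h−1)·(D−2)`. -/
theorem multigraph_complete_bound {V : Type*} [Fintype V] (D h : ℕ)
    (hD : 2 ≤ D) (hh : 6 ≤ h) (hcard : Fintype.card V = h)
    (μ : V → V → ℕ)
    (hsymm : ∀ v w : V, μ v w = μ w v)
    (hloop : ∀ v : V, μ v v = 0)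
    (hcomplete : ∀ v w : V, v ≠ w → 0 < μ v w)
    (hshare : ∀ v w : V, v ≠ w →
      (∑ x ∈ Finset.univ \ {v, w}, ∑ y ∈ Finset.univ \ {v, w}, μ x y) + 4 ≤ 2 * D) :
    (h - 2) * (h - 3) * (∑ v : V, ∑ w : V, μ v w) ≤ 2 * (h * (h - 1) * (D - 2)) := by
  classical
  set P : Finset (V × V) := (Finset.univ : Finset V).offDiag with hPdef
  have hPcard : P.card = h * (h - 1) := by
    rw [hPdef, Finset.offDiag_card, Finset.card_univ, hcard]
    rw [Nat.mul_sub, Nat.mul_one]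
  -- the key count
  have key : ∀ x y : V, x ≠ y →
      (P.filter (fun p => p.1 ∉ ({x, y} : Finset V) ∧ p.2 ∉ ({x, y} : Finset V))).card
        = (h - 2) * (h - 3) := by
    intro x y hxy
    have hset : P.filter (fun p => p.1 ∉ ({x, y} : Finset V) ∧ p.2 ∉ ({x, y} : Finset V))
        = ((Finset.univ \ {x, y} : Finset V)).offDiag := by
      ext p
      simp only [Finset.mem_filter, Finset.mem_offDiag, Finset.mem_sdiff, hPdef,
        Finset.mem_univ, true_and, Finset.mem_insert, Finset.mem_singleton, not_or]
      tauto
    have hc : ((Finset.univ \ {x, y} : Finset V)).card = h - 2 := by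
      rw [Finset.card_sdiff_of_subset (by simp)]
      rw [Finset.card_univ, hcard, Finset.card_insert_of_notMem (by simp [hxy]),
        Finset.card_singleton]
    rw [hset, Finset.offDiag_card, hc, show h - 3 = (h - 2) - 1 by omega]
    generalize h - 2 = a
    rw [Nat.mul_sub, Nat.mul_one]
  -- rewrite each inner double sum as a sum over the whole universe with an indicator
  have step : ∀ p : V × V,
      (∑ x ∈ Finset.univ \ {p.1, p.2}, ∑ y ∈ Finset.univ \ {p.1, p.2}, μ x y)
      = ∑ x : V, ∑ y : V,
          (if p.1 ∉ ({x, y} : Finset V) ∧ p.2 ∉ ({x, y} : Finset V) then μ x y else 0) := by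
    intro p
    set s : Finset V := Finset.univ \ {p.1, p.2} with hs
    have hiff : ∀ x y : V,
        (p.1 ∉ ({x, y} : Finset V) ∧ p.2 ∉ ({x, y} : Finset V)) ↔ (x ∈ s ∧ y ∈ s) := by
      intro x y
      simp only [hs, Finset.mem_sdiff, Finset.mem_univ, true_and, Finset.mem_insert,
        Finset.mem_singleton, not_or]
      constructor
      · rintro ⟨⟨h1, h2⟩, ⟨h3, h4⟩⟩
        exact ⟨⟨fun e => h1 e.symm, fun e => h3 e.symm⟩,
               ⟨fun e => h2 e.symm, fun e => h4 e.symm⟩⟩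
      · rintro ⟨⟨h1, h2⟩, ⟨h3, h4⟩⟩
        exact ⟨⟨fun e => h1 e.symm, fun e => h3 e.symm⟩,
               ⟨fun e => h2 e.symm, fun e => h4 e.symm⟩⟩
    symm
    calc ∑ x : V, ∑ y : V,
          (if p.1 ∉ ({x, y} : Finset V) ∧ p.2 ∉ ({x, y} : Finset V) then μ x y else 0)
        = ∑ x : V, ∑ y : V, (if x ∈ s ∧ y ∈ s then μ x y else 0) := by
          refine Finset.sum_congr rfl fun x _ => Finset.sum_congr rfl fun y _ => ?_
          simp only [hiff]
      _ = ∑ x : V, (if x ∈ s then ∑ y : V, (if y ∈ s then μ x y else 0) else 0) := by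
          refine Finset.sum_congr rfl fun x _ => ?_
          by_cases hx : x ∈ s <;> simp [hx]
      _ = ∑ x ∈ s, ∑ y ∈ s, μ x y := by
          rw [Finset.sum_ite_mem, Finset.univ_inter]
          refine Finset.sum_congr rfl fun x _ => ?_
          rw [Finset.sum_ite_mem, Finset.univ_inter]
  -- the double-counted quantity
  set S := ∑ p ∈ P, (∑ x ∈ Finset.univ \ {p.1, p.2}, ∑ y ∈ Finset.univ \ {p.1, p.2}, μ x y)
    with hS
  have hupper : S ≤ h * (h - 1) * (2 * D - 4) := by
    calc S ≤ ∑ _p ∈ P, (2 * D - 4) := by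
          refine Finset.sum_le_sum fun p hp => ?_
          have hne : p.1 ≠ p.2 := (Finset.mem_offDiag.mp hp).2.2
          have := hshare p.1 p.2 hne
          omega
      _ = h * (h - 1) * (2 * D - 4) := by
          rw [Finset.sum_const, hPcard, smul_eq_mul]
  have hlower : S = (h - 2) * (h - 3) * (∑ v : V, ∑ w : V, μ v w) := by
    calc S = ∑ p ∈ P, ∑ x : V, ∑ y : V,
            (if p.1 ∉ ({x, y} : Finset V) ∧ p.2 ∉ ({x, y} : Finset V) then μ x y else 0) := by
          exact Finset.sum_congr rfl fun p _ => step p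
      _ = ∑ x : V, ∑ y : V, ∑ p ∈ P,
            (if p.1 ∉ ({x, y} : Finset V) ∧ p.2 ∉ ({x, y} : Finset V) then μ x y else 0) := by
          rw [Finset.sum_comm]
          exact Finset.sum_congr rfl fun x _ => Finset.sum_comm
      _ = ∑ x : V, ∑ y : V,
            (P.filter (fun p => p.1 ∉ ({x, y} : Finset V) ∧ p.2 ∉ ({x, y} : Finset V))).card
              * μ x y := by
          refine Finset.sum_congr rfl fun x _ => Finset.sum_congr rfl fun y _ => ?_
          rw [← Finset.sum_filter, Finset.sum_const, smul_eq_mul]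
      _ = ∑ x : V, ∑ y : V, (h - 2) * (h - 3) * μ x y := by
          refine Finset.sum_congr rfl fun x _ => Finset.sum_congr rfl fun y _ => ?_
          by_cases hxy : x = y
          · subst hxy; simp [hloop]
          · rw [key x y hxy]
      _ = (h - 2) * (h - 3) * (∑ v : V, ∑ w : V, μ v w) := by
          simp_rw [← Finset.mul_sum]
  rw [← hlower]
  calc S ≤ h * (h - 1) * (2 * D - 4) := hupper
    _ = 2 * (h * (h - 1) * (D - 2)) := by
        have : 2 * D - 4 = 2 * (D - 2) := by omega
        rw [this]; ring
end

section
/- Let D ≥ 2 be an integer and let H be a multigraph on a vertex set of 6 elements whose underlying simple graph is K₆ minus one edge; that is, there are two distinct vertices x and y with μ(x,y) = 0, while μ(v,w) > 0 for every other pair of distinct vertices v, w. If every edge of H shares at least one endpoint with all but at most D−2 other edges of H (i.e., for every edge vw, the number of edges of H with both endpoints outside {v,w} is at most D−2), then 9·|E(H)| ≤ 22·(D−2). -/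
open scoped Classical

lemma sum_sdiff_pair_eq' {V : Type*} [Fintype V] [DecidableEq V] (μ : V → V → ℕ)
    (hsymm : ∀ v w : V, μ v w = μ w v) (hloop : ∀ v : V, μ v v = 0)
    (v w : V) (hvw : v ≠ w) :
    (∑ a ∈ Finset.univ \ {v, w}, ∑ b ∈ Finset.univ \ {v, w}, μ a b)
      + 2 * (∑ b : V, μ v b) + 2 * (∑ b : V, μ w b)
      = (∑ a : V, ∑ b : V, μ a b) + 2 * μ v w := by
  have h1 : ∀ g : V → ℕ,
      (∑ a ∈ Finset.univ \ {v, w}, g a) + (g v + g w) = ∑ a : V, g a := by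
    intro g
    rw [← Finset.sum_pair hvw]
    exact Finset.sum_sdiff (Finset.subset_univ _)
  have e1 := h1 (fun a => ∑ b : V, μ a b)
  have e3 : (∑ a ∈ Finset.univ \ {v, w}, ∑ b : V, μ a b)
      = (∑ a ∈ Finset.univ \ {v, w}, ∑ b ∈ Finset.univ \ {v, w}, μ a b)
        + ((∑ a ∈ Finset.univ \ {v, w}, μ a v) + (∑ a ∈ Finset.univ \ {v, w}, μ a w)) := by
    rw [← Finset.sum_add_distrib, ← Finset.sum_add_distrib]
    refine Finset.sum_congr rfl fun a _ => ?_
    exact (h1 (μ a)).symm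
  have e4 := h1 (fun a => μ a v)
  have e5 := h1 (fun a => μ a w)
  have e6 : (∑ a : V, μ a v) = ∑ b : V, μ v b :=
    Finset.sum_congr rfl fun a _ => hsymm a v
  have e7 : (∑ a : V, μ a w) = ∑ b : V, μ w b :=
    Finset.sum_congr rfl fun a _ => hsymm a w
  have l1 := hloop v
  have l2 := hloop w
  have s1 := hsymm v w
  omega

set_option maxHeartbeats 1000000 in
/-- Let `D ≥ 2` and let `H` be a multigraph on 6 vertices whose underlying simple
graph is `K₆` minus the edge `xy`: `μ(x,y) = 0` while `μ(v,w) > 0` for every other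
pair of distinct vertices. If every edge of `H` shares at least one endpoint with
all but at most `D−2` other edges, then `9·|E(H)| ≤ 22·(D−2)`, stated in doubled
form as `9·∑_{v,w} μ(v,w) ≤ 44·(D−2)`. -/
theorem multigraph_K6_minus_edge_bound {V : Type*} [Fintype V] (D : ℕ) (hD : 2 ≤ D)
    (hcard : Fintype.card V = 6)
    (μ : V → V → ℕ)
    (hsymm : ∀ v w : V, μ v w = μ w v)
    (hloop : ∀ v : V, μ v v = 0)
    (x y : V) (hxy : x ≠ y) (hzero : μ x y = 0)
    (hpos : ∀ v w : V, v ≠ w → ¬((v = x ∧ w = y) ∨ (v = y ∧ w = x)) → 0 < μ v w)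
    (hshare : ∀ v w : V, v ≠ w → 0 < μ v w →
      (∑ a ∈ Finset.univ \ {v, w}, ∑ b ∈ Finset.univ \ {v, w}, μ a b) + 4 ≤ 2 * D) :
    9 * (∑ v : V, ∑ w : V, μ v w) ≤ 44 * (D - 2) := by
  classical
  have hcard2 : ({x, y} : Finset V).card = 2 := by
    rw [Finset.card_insert_of_notMem (by simp [hxy]), Finset.card_singleton]
  have hRcard : (Finset.univ \ ({x, y} : Finset V)).card = 4 := by
    rw [Finset.card_sdiff_of_subset (Finset.subset_univ _), hcard2, Finset.card_univ, hcard]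
  rw [Finset.card_eq_succ] at hRcard
  obtain ⟨a, t, hat, hins, htcard⟩ := hRcard
  rw [Finset.card_eq_three] at htcard
  obtain ⟨b, c, d, hbc, hbd, hcd, rfl⟩ := htcard
  have hR : Finset.univ \ ({x, y} : Finset V) = {a, b, c, d} := by
    rw [← hins]
  have hab : a ≠ b := by intro h; exact hat (by simp [h])
  have hac : a ≠ c := by intro h; exact hat (by simp [h])
  have had : a ≠ d := by intro h; exact hat (by simp [h])
  have hmemR : ∀ z : V, z ∈ ({a, b, c, d} : Finset V) → z ≠ x ∧ z ≠ y := by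
    intro z hz
    rw [← hR, Finset.mem_sdiff] at hz
    simpa using hz.2
  have hax : a ≠ x := (hmemR a (by simp)).1
  have hay : a ≠ y := (hmemR a (by simp)).2
  have hbx : b ≠ x := (hmemR b (by simp)).1
  have hby : b ≠ y := (hmemR b (by simp)).2
  have hcx : c ≠ x := (hmemR c (by simp)).1
  have hcy : c ≠ y := (hmemR c (by simp)).2
  have hdx : d ≠ x := (hmemR d (by simp)).1
  have hdy : d ≠ y := (hmemR d (by simp)).2
  have hxa := hax.symm; have hxb := hbx.symm; have hxc := hcx.symm; have hxd := hdx.symm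
  have hya := hay.symm; have hyb := hby.symm; have hyc := hcy.symm; have hyd := hdy.symm
  have huniv : (Finset.univ : Finset V) = {x, y, a, b, c, d} := by
    have h := Finset.union_sdiff_of_subset (Finset.subset_univ ({x, y} : Finset V))
    rw [hR] at h
    rw [← h]
    ext z
    simp only [Finset.mem_union, Finset.mem_insert, Finset.mem_singleton]
    tauto
  have hsum6 : ∀ f : V → ℕ,
      (∑ v : V, f v) = f x + f y + f a + f b + f c + f d := by
    intro f
    rw [huniv,
      Finset.sum_insert (by simp [hxy, hxa, hxb, hxc, hxd]),
      Finset.sum_insert (by simp [hya, hyb, hyc, hyd]),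
      Finset.sum_insert (by simp [hab, hac, had]),
      Finset.sum_insert (by simp [hbc, hbd]),
      Finset.sum_insert (by simp [hcd]),
      Finset.sum_singleton]
    ring
  have key : ∀ v w : V, v ≠ w → 0 < μ v w →
      (∑ p : V, ∑ q : V, μ p q) + 2 * μ v w + 4
        ≤ 2 * D + 2 * (∑ b : V, μ v b) + 2 * (∑ b : V, μ w b) := by
    intro v w hvw hp
    have h := hshare v w hvw hp
    have h2 := sum_sdiff_pair_eq' μ hsymm hloop v w hvw
    omega
  -- the 14 edges of K6 minus xy
  have kxa := key x a hxa (hpos x a hxa (by simp [hxy, hay]))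
  have kxb := key x b hxb (hpos x b hxb (by simp [hxy, hby]))
  have kxc := key x c hxc (hpos x c hxc (by simp [hxy, hcy]))
  have kxd := key x d hxd (hpos x d hxd (by simp [hxy, hdy]))
  have kya := key y a hya (hpos y a hya (by simp [hxy.symm, hax]))
  have kyb := key y b hyb (hpos y b hyb (by simp [hxy.symm, hbx]))
  have kyc := key y c hyc (hpos y c hyc (by simp [hxy.symm, hcx]))
  have kyd := key y d hyd (hpos y d hyd (by simp [hxy.symm, hdx]))
  have kab := key a b hab (hpos a b hab (by simp [hax, hay]))
  have kac := key a c hac (hpos a c hac (by simp [hax, hay]))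
  have kad := key a d had (hpos a d had (by simp [hax, hay]))
  have kbc := key b c hbc (hpos b c hbc (by simp [hbx, hby]))
  have kbd := key b d hbd (hpos b d hbd (by simp [hbx, hby]))
  have kcd := key c d hcd (hpos c d hcd (by simp [hcx, hcy]))
  have hS := hsum6 (fun v => ∑ w : V, μ v w)
  have hDx := hsum6 (μ x)
  have hDy := hsum6 (μ y)
  have hDa := hsum6 (μ a)
  have hDb := hsum6 (μ b)
  have hDc := hsum6 (μ c)
  have hDd := hsum6 (μ d)
  have ryx : μ y x = 0 := by rw [hsymm y x]; exact hzero
  have rax : μ a x = μ x a := hsymm a x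
  have rbx : μ b x = μ x b := hsymm b x
  have rcx : μ c x = μ x c := hsymm c x
  have rdx : μ d x = μ x d := hsymm d x
  have ray : μ a y = μ y a := hsymm a y
  have rby : μ b y = μ y b := hsymm b y
  have rcy : μ c y = μ y c := hsymm c y
  have rdy : μ d y = μ y d := hsymm d y
  have rba : μ b a = μ a b := hsymm b a
  have rca : μ c a = μ a c := hsymm c a
  have rda : μ d a = μ a d := hsymm d a
  have rcb : μ c b = μ b c := hsymm c b
  have rdb : μ d b = μ b d := hsymm d b
  have rdc : μ d c = μ c d := hsymm d c
  have lx := hloop x; have ly := hloop y; have la := hloop a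
  have lb := hloop b; have lc := hloop c; have ld := hloop d
  simp only [hS, hDx, hDy, hDa, hDb, hDc, hDd, hzero, ryx, rax, rbx, rcx, rdx, ray, rby,
    rcy, rdy, rba, rca, rda, rcb, rdb, rdc, lx, ly, la, lb, lc, ld, add_zero, zero_add] at kxa kxb kxc kxd kya kyb kyc kyd kab kac kad kbc kbd kcd ⊢
  obtain ⟨E, rfl⟩ : ∃ E, D = E + 2 := ⟨D - 2, by omega⟩
  have hE : 44 * (E + 2 - 2) = 44 * E := by omega
  rw [hE]
  linarith
end

section
/- Let G be a finite simple graph with mad(G) < 4, let S be a nonempty set of vertices of G, and let R₃ be the set of vertices v ∉ S that have at least 3 neighbors in S. Then |R₃| < 2·|S|. -/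
open scoped Classical

/-- Let `G` be a finite simple graph with `mad(G) < 4` (every nonempty subgraph `H`
satisfies `|E(H)| < 2|V(H)|`, expressed via induced subgraphs as
`∑_{v ∈ A} deg_A(v) < 4·|A|`), let `S` be a nonempty set of vertices, and let `R₃`
be the set of vertices not in `S` with at least 3 neighbors in `S`. Then
`|R₃| < 2·|S|`. -/
theorem R3_bound {V : Type*} [Fintype V]
    (G : SimpleGraph V)
    (hmad : ∀ A : Finset V, A.Nonempty →
      ∑ v ∈ A, (A.filter (fun w => G.Adj v w)).card < 4 * A.card)
    (S : Finset V) (hS : S.Nonempty) :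
    ((Finset.univ \ S).filter
      (fun v => 3 ≤ (S.filter (fun w => G.Adj v w)).card)).card < 2 * S.card := by
  set R := (Finset.univ \ S).filter
      (fun v => 3 ≤ (S.filter (fun w => G.Adj v w)).card) with hR
  have hdisj : Disjoint S R := by
    refine Finset.disjoint_left.2 fun a haS haR => ?_
    have := (Finset.mem_filter.1 haR).1
    exact (Finset.mem_sdiff.1 this).2 haS
  set A := S ∪ R with hA
  have hAcard : A.card = S.card + R.card := Finset.card_union_of_disjoint hdisj
  have hAne : A.Nonempty := hS.mono Finset.subset_union_left
  have hmadA := hmad A hAne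
  have hsplit : ∑ v ∈ A, (A.filter (fun w => G.Adj v w)).card
      = ∑ v ∈ S, (A.filter (fun w => G.Adj v w)).card
        + ∑ v ∈ R, (A.filter (fun w => G.Adj v w)).card := by
    rw [hA, Finset.sum_union hdisj]
  -- key fact: every v ∈ R has ≥ 3 neighbors in S
  have hRmem : ∀ v ∈ R, 3 ≤ (S.filter (fun w => G.Adj v w)).card := by
    intro v hv
    exact (Finset.mem_filter.1 hv).2
  -- R side
  have hRside : 3 * R.card ≤ ∑ v ∈ R, (A.filter (fun w => G.Adj v w)).card := by
    calc 3 * R.card = ∑ _v ∈ R, 3 := by rw [Finset.sum_const, smul_eq_mul, mul_comm]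
    _ ≤ ∑ v ∈ R, (A.filter (fun w => G.Adj v w)).card := by
        refine Finset.sum_le_sum fun v hv => (hRmem v hv).trans ?_
        exact Finset.card_le_card
          (Finset.filter_subset_filter _ Finset.subset_union_left)
  -- S side via double counting
  have hswap : ∑ v ∈ S, (R.filter (fun w => G.Adj v w)).card
      = ∑ w ∈ R, (S.filter (fun v => G.Adj w v)).card := by
    simp only [Finset.card_filter]
    rw [Finset.sum_comm]
    refine Finset.sum_congr rfl fun w _ => Finset.sum_congr rfl fun v _ => ?_
    simp [G.adj_comm]
  have hSside : 3 * R.card ≤ ∑ v ∈ S, (A.filter (fun w => G.Adj v w)).card := by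
    calc 3 * R.card = ∑ _w ∈ R, 3 := by rw [Finset.sum_const, smul_eq_mul, mul_comm]
    _ ≤ ∑ w ∈ R, (S.filter (fun v => G.Adj w v)).card :=
        Finset.sum_le_sum fun w hw => hRmem w hw
    _ = ∑ v ∈ S, (R.filter (fun w => G.Adj v w)).card := hswap.symm
    _ ≤ ∑ v ∈ S, (A.filter (fun w => G.Adj v w)).card := by
        refine Finset.sum_le_sum fun v _ => Finset.card_le_card ?_
        exact Finset.filter_subset_filter _ Finset.subset_union_right
  have h6 : 6 * R.card ≤ ∑ v ∈ A, (A.filter (fun w => G.Adj v w)).card := by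
    rw [hsplit]; omega
  rw [hAcard] at hmadA
  omega
end

section
/- For every even positive integer D, there exists a finite 2-degenerate simple graph G with maximum degree at most D such that G² contains a clique with (5/2)·D vertices (i.e., a clique S with 2·|S| = 5·D). -/
open scoped Classical

/-- A graph is `k`-degenerate: every nonempty (induced) subgraph has a vertex of
degree at most `k`. -/
def Degenerate {V : Type*} (k : ℕ) (G : SimpleGraph V) : Prop :=
  ∀ A : Finset V, A.Nonempty → ∃ v ∈ A, (A.filter (fun w => G.Adj v w)).card ≤ k

/-!
Start from a pentagon of hubs `0, …, 4 ∈ ZMod 5`. For each of its five diagonals `{i, i + 2}` add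
`m = D / 2 - 1` chord vertices adjacent to both ends, and for every chord vertex `a` on diagonal `i`
and `b` on diagonal `i + 1` add a link vertex of degree 2 adjacent to exactly `a` and `b`. Every
hub and every chord vertex then has degree `2m + 2 = D`. In the layering hubs < chords < links
each vertex has at most two neighbours in its own or a lower layer, so the graph is 2-degenerate.
Hubs and chord vertices, `5 (m + 1) = 5D / 2` of them, are pairwise at distance at most 2: the
pentagon has diameter 2, every hub is adjacent or equal to an end of each diagonal, chords of
diagonals sharing an end meet at a hub, and chords of the remaining (consecutive) diagonals are
joined by a link vertex.
-/

open Finset SimpleGraph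

section General

variable {V W : Type*} {G : SimpleGraph V} {H : SimpleGraph W} {k : ℕ}

theorem degenerate_of_rank {α : Type*} [LinearOrder α] (r : V → α)
    (h : ∀ v, ∃ s : Finset V, #s ≤ k ∧ ∀ w, G.Adj v w → r w ≤ r v → w ∈ s) :
    Degenerate k G := by
  intro A hA
  obtain ⟨v, hv, hmax⟩ := A.exists_max_image r hA
  obtain ⟨s, hs, hsub⟩ := h v
  refine ⟨v, hv, (card_le_card fun w hw => ?_).trans hs⟩
  rw [mem_filter] at hw
  exact hsub w hw.2 (hmax w hw.1)

theorem Degenerate.comap (f : G ↪g H) (h : Degenerate k H) : Degenerate k G := by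
  intro A hA
  obtain ⟨_, hv, hdeg⟩ := h (A.map f.toEmbedding) hA.map
  obtain ⟨v, hvA, rfl⟩ := mem_map.1 hv
  refine ⟨v, hvA, le_of_eq_of_le ?_ hdeg⟩
  rw [filter_map, card_map]
  congr 1
  ext w
  simp

namespace SimpleGraph

def Embedding.squareHom (f : G ↪g H) : square G →g square H where
  toFun := f
  map_rel' := fun ⟨hne, h⟩ => ⟨f.injective.ne hne,
    h.imp f.map_adj_iff.2 fun ⟨w, h₁, h₂⟩ => ⟨f w, f.map_adj_iff.2 h₁, f.map_adj_iff.2 h₂⟩⟩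

theorem IsClique.image_hom {s : Set V} (hs : G.IsClique s) (f : G →g H) :
    H.IsClique (f '' s) := by
  rintro _ ⟨u, hu, rfl⟩ _ ⟨v, hv, rfl⟩ hne
  exact f.map_adj (hs hu hv (ne_of_apply_ne f hne))

end SimpleGraph

end General

namespace PentagonConstruction

inductive Vertex (m : ℕ)
  | hub (i : ZMod 5)
  | chord (i : ZMod 5) (a : Fin m)
  | link (i : ZMod 5) (a b : Fin m)

open Vertex

variable {m : ℕ}

def Vertex.toSum : Vertex m → ZMod 5 ⊕ (ZMod 5 × Fin m) ⊕ (ZMod 5 × Fin m × Fin m)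
  | hub i => .inl i
  | chord i a => .inr (.inl (i, a))
  | link i a b => .inr (.inr (i, a, b))

theorem Vertex.toSum_injective : Function.Injective (toSum : Vertex m → _) := by
  rintro (_ | _ | _) (_ | _ | _) h <;> simp_all [toSum]

noncomputable instance : Fintype (Vertex m) := Fintype.ofInjective _ Vertex.toSum_injective

def edge : Vertex m → Vertex m → Prop
  | hub i, hub j => j = i + 1
  | chord i _, hub j => j = i ∨ j = i + 2
  | link i a b, chord j c => j = i ∧ c = a ∨ j = i + 1 ∧ c = b
  | _, _ => False

def graph (m : ℕ) : SimpleGraph (Vertex m) where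
  Adj u v := edge u v ∨ edge v u
  symm := ⟨fun _ _ => Or.symm⟩
  loopless := ⟨by rintro (i | _ | _) h <;> simp [edge] at h; exact absurd h (by decide)⟩

def layer : Vertex m → ℕ
  | hub _ => 0
  | chord _ _ => 1
  | link _ _ _ => 2

noncomputable def down : Vertex m → Finset (Vertex m)
  | hub i => {hub (i + 1), hub (i - 1)}
  | chord i _ => {hub i, hub (i + 2)}
  | link i a b => {chord i a, chord (i + 1) b}

noncomputable def up : Vertex m → Finset (Vertex m)
  | hub i => univ.image (chord i) ∪ univ.image (chord (i - 2))
  | chord i a => univ.image (link i a) ∪ univ.image (fun b => link (i - 1) b a)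
  | link _ _ _ => ∅

theorem card_down_le (v : Vertex m) : #(down v) ≤ 2 := by
  cases v <;> exact card_le_two

theorem card_up_le (v : Vertex m) : #(up v) ≤ 2 * m := by
  cases v with
  | link => simp [up]
  | _ =>
    grw [up, card_union_le, card_image_le, card_image_le]
    simp only [card_univ, Fintype.card_fin]
    omega

theorem mem_down_of_adj {v w : Vertex m} (h : (graph m).Adj v w) (hw : layer w ≤ layer v) :
    w ∈ down v := by
  rcases v with i | ⟨i, a⟩ | ⟨i, a, b⟩ <;> rcases w with j | ⟨j, c⟩ | ⟨j, c, d⟩ <;>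
    simp only [graph] at h <;> grind [edge, layer, down]

theorem mem_up_of_adj {v w : Vertex m} (h : (graph m).Adj v w) (hw : layer v < layer w) :
    w ∈ up v := by
  rcases v with i | ⟨i, a⟩ | ⟨i, a, b⟩ <;> rcases w with j | ⟨j, c⟩ | ⟨j, c, d⟩ <;>
    simp only [graph] at h <;> grind [edge, layer, up]

theorem degenerate_graph (m : ℕ) : Degenerate 2 (graph m) :=
  degenerate_of_rank layer fun v => ⟨down v, card_down_le v, fun _ => mem_down_of_adj⟩

theorem degree_graph_le (v : Vertex m) : (graph m).degree v ≤ 2 * m + 2 := by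
  rw [← card_neighborFinset_eq_degree]
  calc #((graph m).neighborFinset v) ≤ #(down v ∪ up v) := card_le_card fun w hw => ?_
    _ ≤ 2 + 2 * m := (card_union_le _ _).trans (add_le_add (card_down_le v) (card_up_le v))
    _ = 2 * m + 2 := by ring
  rw [mem_neighborFinset] at hw
  rcases le_or_gt (layer w) (layer v) with hl | hl
  exacts [mem_union_left _ (mem_down_of_adj hw hl), mem_union_right _ (mem_up_of_adj hw hl)]

theorem square_adj_hub_hub {i j : ZMod 5} (h : i ≠ j) :
    (square (graph m)).Adj (hub i) (hub j) := by
  have : ∀ i j : ZMod 5, i ≠ j → (j = i + 1 ∨ i = j + 1) ∨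
      ∃ w, (w = i + 1 ∨ i = w + 1) ∧ (j = w + 1 ∨ w = j + 1) := by decide
  refine ⟨by simpa using h, ?_⟩
  obtain h | ⟨w, h₁, h₂⟩ := this i j h
  exacts [Or.inl h, Or.inr ⟨hub w, h₁, h₂⟩]

theorem square_adj_hub_chord (j i : ZMod 5) (a : Fin m) :
    (square (graph m)).Adj (hub j) (chord i a) := by
  have : ∀ j i : ZMod 5, (j = i ∨ j = i + 2) ∨
      ∃ w, (w = j + 1 ∨ j = w + 1) ∧ (w = i ∨ w = i + 2) := by decide
  refine ⟨by simp, ?_⟩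
  obtain h | ⟨w, h₁, h₂⟩ := this j i
  exacts [Or.inl (Or.inr h), Or.inr ⟨hub w, h₁, Or.inr h₂⟩]

theorem square_adj_chord_chord {i j : ZMod 5} {a b : Fin m} (h : chord i a ≠ chord j b) :
    (square (graph m)).Adj (chord i a) (chord j b) := by
  have : ∀ i j : ZMod 5, (∃ w, (w = i ∨ w = i + 2) ∧ (w = j ∨ w = j + 2)) ∨
      j = i + 1 ∨ i = j + 1 := by decide
  refine ⟨h, Or.inr ?_⟩
  obtain ⟨w, h₁, h₂⟩ | h | h := this i j
  · exact ⟨hub w, Or.inl h₁, Or.inr h₂⟩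
  · exact ⟨link i a b, Or.inr (Or.inl ⟨rfl, rfl⟩), Or.inl (Or.inr ⟨h, rfl⟩)⟩
  · exact ⟨link j b a, Or.inr (Or.inr ⟨h, rfl⟩), Or.inl (Or.inl ⟨rfl, rfl⟩)⟩

noncomputable def clique (m : ℕ) : Finset (Vertex m) :=
  univ.image hub ∪ univ.image fun p : ZMod 5 × Fin m => chord p.1 p.2

theorem card_clique : #(clique m) = 5 * (m + 1) := by
  rw [clique, card_union_of_disjoint (by simp [Finset.disjoint_left]),
    card_image_of_injective _ fun _ _ => hub.inj,
    card_image_of_injective _ fun _ _ h => Prod.ext (chord.inj h).1 (chord.inj h).2]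
  simp only [card_univ, ZMod.card, Fintype.card_prod, Fintype.card_fin]
  ring

theorem isClique_square_clique (m : ℕ) :
    (square (graph m)).IsClique (clique m : Set (Vertex m)) := by
  intro u hu v hv huv
  simp only [clique, coe_union, coe_image, coe_univ, Set.image_univ, Set.mem_union,
    Set.mem_range] at hu hv
  obtain ⟨i, rfl⟩ | ⟨⟨i, a⟩, rfl⟩ := hu <;> obtain ⟨j, rfl⟩ | ⟨⟨j, b⟩, rfl⟩ := hv
  · exact square_adj_hub_hub (by simpa using huv)
  · exact square_adj_hub_chord i j b
  · exact (square_adj_hub_chord j i a).symm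
  · exact square_adj_chord_chord huv

end PentagonConstruction

open PentagonConstruction

/-- For every even positive integer `D`, there exists a finite 2-degenerate simple
graph `G` with maximum degree at most `D` such that `G²` contains a clique `S` with
`2·|S| = 5·D`. -/
theorem lower_bound_construction (D : ℕ) (hD : 0 < D) (heven : Even D) :
    ∃ (n : ℕ) (G : SimpleGraph (Fin n)) (S : Finset (Fin n)),
      Degenerate 2 G ∧
      (∀ v : Fin n, (Finset.univ.filter (fun w => G.Adj v w)).card ≤ D) ∧
      (square G).IsClique (S : Set (Fin n)) ∧
      2 * S.card = 5 * D := by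
  obtain ⟨m, rfl⟩ : ∃ m, D = 2 * m + 2 := ⟨D / 2 - 1, by grind⟩
  let e := Fintype.equivFin (Vertex m)
  let φ := Iso.map e (graph m)
  refine ⟨_, _, (clique m).map e.toEmbedding, (degenerate_graph m).comap φ.symm.toEmbedding,
    fun v => ?_, ?_, ?_⟩
  · have := degree_graph_le (φ.symm v)
    rw [← φ.degree_eq, φ.apply_symm_apply, ← card_neighborFinset_eq_degree,
      neighborFinset_eq_filter] at this
    convert this
  · rw [coe_map]
    exact (isClique_square_clique m).image_hom φ.toEmbedding.squareHom
  · rw [card_map, card_clique]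
    ring
end

section
/- For every integer D ≥ 2, there exists a finite 2-degenerate simple graph H with maximum degree at most D such that H² is not (3D−5)-degenerate; that is, some nonempty subgraph of H² has minimum degree at least 3D−4. -/
open scoped Classical

/-!
Take two copies of a `D × D` grid of cells, and in each copy join every cell to a hub for its
row and a hub for its column; then join the cell `(i, j)` of the first copy to the cells
`(i, j + k)`, `0 ≤ k < D - 2`, of the second copy through a path of length two. Hubs have degree
`D`, cells `2 + (D - 2)`, and the graph is 2-degenerate: the link vertices have degree 2, after
removing them each cell has degree 2, and then the hubs are isolated. In the square, a cell sees
the `D - 1` other cells of its row and of its column through the hubs and `D - 2` cells of the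
other copy through the links, so the cells induce a subgraph of minimum degree `3D - 4`.
-/

open Finset

section General

variable {V W : Type*} {G : SimpleGraph V} {G' : SimpleGraph W}

lemma square_adj_of_adj_of_adj {u v w : V} (huw : u ≠ w) (huv : G.Adj u v) (hvw : G.Adj v w) :
    (square G).Adj u w :=
  ⟨huw, .inr ⟨v, huv, hvw⟩⟩

lemma Degenerate.of_rank {k : ℕ} (r : V → ℕ)
    (h : ∀ v, ∃ s : Finset V, #s ≤ k ∧ ∀ w, G.Adj v w → r v ≤ r w → w ∈ s) :
    Degenerate k G := by
  intro A hA
  obtain ⟨v, hvA, hmin⟩ := A.exists_min_image r hA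
  obtain ⟨s, hs, hsub⟩ := h v
  refine ⟨v, hvA, (card_le_card fun w hw => ?_).trans hs⟩
  obtain ⟨hwA, hvw⟩ := mem_filter.1 hw
  exact hsub w hvw (hmin w hwA)

namespace SimpleGraph.Iso

def square (e : G ≃g G') : _root_.square G ≃g _root_.square G' where
  toEquiv := e.toEquiv
  map_rel_iff' {u v} := by
    change (_ ∧ _) ↔ (_ ∧ _)
    simp only [RelIso.coe_fn_toEquiv, e.injective.ne_iff, e.map_adj_iff, e.surjective.exists]

lemma card_filter_adj_map (e : G ≃g G') (A : Finset V) (v : V) :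
    #((A.map e.toEquiv.toEmbedding).filter (G'.Adj (e v))) = #(A.filter (G.Adj v)) := by
  rw [filter_map, card_map]
  exact congrArg card (filter_congr fun w _ => e.map_adj_iff)

lemma degenerate (e : G ≃g G') {k : ℕ} (h : Degenerate k G) : Degenerate k G' := by
  intro A hA
  obtain ⟨v, hv, hcard⟩ := h (A.map e.symm.toEquiv.toEmbedding) hA.map
  have hmap : (A.map e.symm.toEquiv.toEmbedding).map e.toEquiv.toEmbedding = A := by
    simp [Finset.map_map]
  rw [← e.card_filter_adj_map, hmap] at hcard
  obtain ⟨w, hw, rfl⟩ := mem_map.1 hv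
  exact ⟨w, hw, by simpa using hcard⟩

end SimpleGraph.Iso

end General

lemma ZMod.natCast_finVal_injective {m n : ℕ} (h : m ≤ n) :
    Function.Injective (fun k : Fin m => (k.val : ZMod n)) := by
  intro a b hab
  simp only [ZMod.natCast_eq_natCast_iff', Nat.mod_eq_of_lt (a.2.trans_le h),
    Nat.mod_eq_of_lt (b.2.trans_le h)] at hab
  exact Fin.ext hab

namespace SquareConstruction

variable (D : ℕ)

/-- `hub c s x` is the row (`s = false`) or column (`s = true`) hub `x` of copy `c`, `cell c i j`
the cell `(i, j)` of copy `c`, and `link i j k` the middle vertex of the path from `cell false i j`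
to `cell true i (j + k)`. -/
abbrev Vertex :=
  (Bool × Bool × ZMod D) ⊕ (Bool × ZMod D × ZMod D) ⊕ (ZMod D × ZMod D × Fin (D - 2))

variable {D}

def hub (c s : Bool) (x : ZMod D) : Vertex D := .inl (c, s, x)
def cell (c : Bool) (i j : ZMod D) : Vertex D := .inr (.inl (c, i, j))
def link (i j : ZMod D) (k : Fin (D - 2)) : Vertex D := .inr (.inr (i, j, k))

def Linked : Vertex D → Vertex D → Prop
  | .inl (c, s, x), .inr (.inl (c', i, j)) => c' = c ∧ x = if s then j else i
  | .inr (.inr (i, j, k)), .inr (.inl (c, i', j')) => i' = i ∧ j' = if c then j + k else j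
  | _, _ => False

variable (D) in
def graph : SimpleGraph (Vertex D) := .fromRel Linked

lemma adj_hub_cell {c s c' : Bool} {x i j : ZMod D} :
    (graph D).Adj (hub c s x) (cell c' i j) ↔ c' = c ∧ x = if s then j else i := by
  simp [graph, Linked, hub, cell]

lemma adj_link_cell {i j i' j' : ZMod D} {k : Fin (D - 2)} {c : Bool} :
    (graph D).Adj (link i j k) (cell c i' j') ↔ i' = i ∧ j' = if c then j + k else j := by
  simp [graph, Linked, link, cell]

lemma eq_of_adj_link {i j : ZMod D} {k : Fin (D - 2)} {w : Vertex D}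
    (h : (graph D).Adj (link i j k) w) : w = cell false i j ∨ w = cell true i (j + k) := by
  rcases w with ⟨c, s, x⟩ | ⟨_ | _, i', j'⟩ | ⟨i', j', k'⟩ <;>
    simp_all [graph, Linked, link, cell]

lemma eq_of_adj_cell {c : Bool} {i j : ZMod D} {w : Vertex D}
    (h : (graph D).Adj (cell c i j) w) :
    w = hub c false i ∨ w = hub c true j ∨
      ∃ k : Fin (D - 2), w = link i (if c then j - k else j) k := by
  rcases w with ⟨c', _ | _, x⟩ | ⟨c', i', j'⟩ | ⟨i', j', k⟩ <;> cases c
  all_goals simp_all [graph, Linked, hub, link, cell]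

lemma eq_of_adj_hub {c s : Bool} {x : ZMod D} {w : Vertex D} (h : (graph D).Adj (hub c s x) w) :
    ∃ y, w = if s then cell c y x else cell c x y := by
  rcases w with ⟨c', s', x'⟩ | ⟨c', i, j⟩ | ⟨i, j, k⟩ <;> cases s
  all_goals simp_all [graph, Linked, hub, cell]

@[simp]
lemma cell_inj {c c' : Bool} {i j i' j' : ZMod D} :
    cell c i j = cell c' i' j' ↔ c = c' ∧ i = i' ∧ j = j' := by
  simp [cell]

lemma degenerate_graph : Degenerate 2 (graph D) := by
  refine Degenerate.of_rank (Sum.elim (fun _ => 2) (Sum.elim (fun _ => 1) (fun _ => 0))) ?_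
  rintro (⟨c, s, x⟩ | ⟨c, i, j⟩ | ⟨i, j, k⟩)
  · refine ⟨∅, by simp, fun w hw hr => ?_⟩
    obtain ⟨y, rfl⟩ := eq_of_adj_hub hw
    cases s <;> simp [cell] at hr
  · refine ⟨{hub c false i, hub c true j}, card_le_two, fun w hw hr => ?_⟩
    rcases eq_of_adj_cell hw with rfl | rfl | ⟨k, rfl⟩ <;> simp_all [link]
  · refine ⟨{cell false i j, cell true i (j + k)}, card_le_two, fun w hw _ => ?_⟩
    rcases eq_of_adj_link hw with rfl | rfl <;> simp

lemma square_adj_cell_of_ne_right {c : Bool} {i j j' : ZMod D} (h : j ≠ j') :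
    (square (graph D)).Adj (cell c i j) (cell c i j') :=
  square_adj_of_adj_of_adj (by simp [h]) (adj_hub_cell (s := false).2 ⟨rfl, rfl⟩).symm
    (adj_hub_cell.2 ⟨rfl, rfl⟩)

lemma square_adj_cell_of_ne_left {c : Bool} {i i' j : ZMod D} (h : i ≠ i') :
    (square (graph D)).Adj (cell c i j) (cell c i' j) :=
  square_adj_of_adj_of_adj (by simp [h]) (adj_hub_cell (s := true).2 ⟨rfl, rfl⟩).symm
    (adj_hub_cell.2 ⟨rfl, rfl⟩)

lemma square_adj_cell_add (i j : ZMod D) (k : Fin (D - 2)) :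
    (square (graph D)).Adj (cell false i j) (cell true i (j + k)) :=
  square_adj_of_adj_of_adj (by simp) (adj_link_cell (k := k).2 ⟨rfl, rfl⟩).symm
    (adj_link_cell.2 ⟨rfl, rfl⟩)

section Finite

variable [NeZero D]

lemma card_filter_adj_le (hD : 2 ≤ D) (v : Vertex D) :
    #(univ.filter ((graph D).Adj v)) ≤ D := by
  rcases v with ⟨c, s, x⟩ | ⟨c, i, j⟩ | ⟨i, j, k⟩
  · calc _ ≤ #(univ.image fun y : ZMod D => if s then cell c y x else cell c x y) :=
          card_le_card fun w hw => by
            obtain ⟨y, rfl⟩ := eq_of_adj_hub (mem_filter.1 hw).2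
            exact mem_image_of_mem _ (mem_univ y)
      _ ≤ D := card_image_le.trans (by simp)
  · calc _ ≤ #({hub c false i, hub c true j} ∪
            univ.image fun k : Fin (D - 2) => link i (if c then j - k else j) k) :=
          card_le_card fun w hw => by
            rcases eq_of_adj_cell (mem_filter.1 hw).2 with rfl | rfl | ⟨k, rfl⟩ <;> simp
      _ ≤ 2 + (D - 2) :=
          (card_union_le _ _).trans (add_le_add card_le_two (card_image_le.trans (by simp)))
      _ = D := by omega
  · calc _ ≤ #{cell false i j, cell true i (j + k)} :=
          card_le_card fun w hw => by
            rcases eq_of_adj_link (mem_filter.1 hw).2 with rfl | rfl <;> simp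
      _ ≤ D := card_le_two.trans hD

variable (D) in
def cells : Finset (Vertex D) := univ.image fun p : Bool × ZMod D × ZMod D => cell p.1 p.2.1 p.2.2

lemma cell_mem_cells (c : Bool) (i j : ZMod D) : cell c i j ∈ cells D :=
  mem_image_of_mem _ (mem_univ (c, i, j))

lemma le_card_filter_square_adj_cell (c : Bool) (i j : ZMod D) :
    3 * D - 4 ≤ #((cells D).filter ((square (graph D)).Adj (cell c i j))) := by
  set F := (cells D).filter ((square (graph D)).Adj (cell c i j))
  set rowMates := (univ.erase j).image (cell c i)
  set colMates := (univ.erase i).image (cell c · j)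
  set linkMates := univ.image fun k : Fin (D - 2) => cell (!c) i (if c then j - k else j + k)
  have hrow : rowMates ⊆ F := by
    simp only [rowMates, F, image_subset_iff, mem_erase, mem_filter]
    exact fun j' hj' => ⟨cell_mem_cells _ _ _, square_adj_cell_of_ne_right (Ne.symm hj'.1)⟩
  have hcol : colMates ⊆ F := by
    simp only [colMates, F, image_subset_iff, mem_erase, mem_filter]
    exact fun i' hi' => ⟨cell_mem_cells _ _ _, square_adj_cell_of_ne_left (Ne.symm hi'.1)⟩
  have hlink : linkMates ⊆ F := by
    simp only [linkMates, F, image_subset_iff, mem_filter]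
    refine fun k _ => ⟨cell_mem_cells _ _ _, ?_⟩
    cases c
    · exact square_adj_cell_add i j k
    · simpa using (square_adj_cell_add i (j - k) k).symm
  have hshift_inj : Function.Injective fun k : Fin (D - 2) => (if c then j - k else j + k) := by
    cases c
    · exact (add_right_injective j).comp (ZMod.natCast_finVal_injective (Nat.sub_le D 2))
    · exact sub_right_injective.comp (ZMod.natCast_finVal_injective (Nat.sub_le D 2))
  calc 3 * D - 4 ≤ (D - 1) + (D - 1) + (D - 2) := by have := NeZero.one_le (n := D); omega
    _ = #(rowMates ∪ colMates ∪ linkMates) := by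
      have hrc : Disjoint rowMates colMates := by
        simp +contextual [rowMates, colMates, disjoint_left]
      have hrcl : Disjoint (rowMates ∪ colMates) linkMates := by
        refine disjoint_right.2 fun w hw hw' => ?_
        obtain ⟨k, -, rfl⟩ := mem_image.1 hw
        rcases mem_union.1 hw' with h | h <;> obtain ⟨_, -, h⟩ := mem_image.1 h <;> simp at h
      rw [card_union_of_disjoint hrcl, card_union_of_disjoint hrc,
        card_image_of_injective _ fun _ _ h => (cell_inj.1 h).2.2,
        card_image_of_injective _ fun _ _ h => (cell_inj.1 h).2.1,
        card_image_of_injective _ fun _ _ h => hshift_inj (cell_inj.1 h).2.2]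
      simp
    _ ≤ _ := card_le_card (union_subset (union_subset hrow hcol) hlink)

end Finite

end SquareConstruction

open SquareConstruction in
/-- For every integer `D ≥ 2`, there exists a finite 2-degenerate simple graph `H`
with maximum degree at most `D` such that `H²` is not `(3D−5)`-degenerate: some
nonempty (induced) subgraph of `H²` has minimum degree at least `3D−4`. -/
theorem square_not_degenerate_construction (D : ℕ) (hD : 2 ≤ D) :
    ∃ (n : ℕ) (H : SimpleGraph (Fin n)),
      Degenerate 2 H ∧
      (∀ v : Fin n, (Finset.univ.filter (fun w => H.Adj v w)).card ≤ D) ∧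
      ∃ A : Finset (Fin n), A.Nonempty ∧
        ∀ v ∈ A, 3 * D - 4 ≤ (A.filter (fun w => (square H).Adj v w)).card := by
  have : NeZero D := ⟨by omega⟩
  let e := SimpleGraph.Iso.map (Fintype.equivFin (Vertex D)) (graph D)
  refine ⟨_, _, e.degenerate degenerate_graph, fun v => ?_,
    (cells D).map e.toEquiv.toEmbedding, ⟨_, mem_map_of_mem _ (cell_mem_cells false 0 0)⟩, ?_⟩
  · obtain ⟨v, rfl⟩ := e.surjective v
    rw [← map_univ_equiv e.toEquiv, e.card_filter_adj_map]
    exact card_filter_adj_le hD v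
  · intro w hw
    obtain ⟨v, hv, rfl⟩ := mem_map.1 hw
    obtain ⟨⟨c, i, j⟩, -, rfl⟩ := mem_image.1 hv
    exact (le_card_filter_square_adj_cell c i j).trans_eq (e.square.card_filter_adj_map _ _).symm
end
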